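/- arXiv:2404.14603 — 10 statements merged into one kernel-verified Lean document; each statement's English description precedes it below -/
import Mathlib

section
/- Existence of a causal representation uniformly in the CATE function (Theorem 1): Let a : Ω → ℝ be 𝒢-measurable with E[a²] < ∞, E[a] > 0, and essential supremum a_max := essSup(a) < ∞. Then there exists a weight function w (𝒢-measurable, 0 ≤ w ≤ 1 pointwise, E[w] > 0) such that E[a·τ]/E[a] = E[w·τ]/E[w] for every 𝒢-measurable τ : Ω → ℝ with E[τ²] < ∞, if and only if a ≥ 0 P-almost surely. -/
/-!
A weight `w ≥ 0` gives nonnegative weighted means to nonnegative `τ`. Testing the representation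
on indicators `τ = 1_s` of `𝒢`-measurable sets therefore gives `∫_s a ≥ 0` for all such `s`,
which forces `a ≥ 0` almost surely. Conversely, if `0 ≤ a ≤ C` almost surely, the weight
`w = clamp(a, 0, C) / C` equals `a / C` almost surely, and weighted means are invariant under
rescaling the weight by a nonzero constant.
-/

open MeasureTheory

section WeightedMean

variable {Ω : Type*} {m m0 : MeasurableSpace Ω} {μ : Measure Ω}

theorem ae_nonneg_of_forall_setIntegral_nonneg_of_le (hm : m ≤ m0) {f : Ω → ℝ}
    (hf_meas : StronglyMeasurable[m] f) (hf : Integrable f μ)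
    (h : ∀ s, MeasurableSet[m] s → 0 ≤ ∫ x in s, f x ∂μ) :
    0 ≤ᵐ[μ] f :=
  ae_of_ae_trim hm <| ae_nonneg_of_forall_setIntegral_nonneg (hf.trim hm hf_meas)
    fun s hs _ => (setIntegral_trim hm hf_meas hs).symm ▸ h s hs

theorem integral_mul_indicator_one (f : Ω → ℝ) {s : Set Ω} (hs : MeasurableSet s) :
    ∫ x, f x * s.indicator 1 x ∂μ = ∫ x in s, f x ∂μ := by
  simp only [← Set.indicator_mul_right, Pi.one_apply, mul_one]
  exact integral_indicator hs

theorem setIntegral_nonneg_of_div_integral_eq {a w : Ω → ℝ} (ha : 0 < ∫ x, a x ∂μ)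
    (hw : 0 ≤ᵐ[μ] w) {s : Set Ω} (hs : MeasurableSet s)
    (h : (∫ x, a x * s.indicator 1 x ∂μ) / (∫ x, a x ∂μ)
      = (∫ x, w x * s.indicator 1 x ∂μ) / (∫ x, w x ∂μ)) :
    0 ≤ ∫ x in s, a x ∂μ := by
  have hw_mean : 0 ≤ (∫ x, w x * s.indicator 1 x ∂μ) / (∫ x, w x ∂μ) := by
    rw [integral_mul_indicator_one w hs]
    exact div_nonneg (setIntegral_nonneg_of_ae_restrict (ae_restrict_of_ae hw))
      (integral_nonneg_of_ae hw)
  rwa [← h, integral_mul_indicator_one a hs, le_div_iff₀ ha, zero_mul] at hw_mean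

theorem div_integral_eq_of_ae_eq_const_mul {a w : Ω → ℝ} {c : ℝ} (hc : c ≠ 0)
    (hw : w =ᵐ[μ] fun x => c * a x) (τ : Ω → ℝ) :
    (∫ x, a x * τ x ∂μ) / (∫ x, a x ∂μ)
      = (∫ x, w x * τ x ∂μ) / (∫ x, w x ∂μ) := by
  have hwτ : (fun x => w x * τ x) =ᵐ[μ] fun x => c * (a x * τ x) :=
    hw.mono fun x hx => by simp only [hx, mul_assoc]
  rw [integral_congr_ae hwτ, integral_congr_ae hw, integral_const_mul, integral_const_mul,
    mul_div_mul_left _ _ hc]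

theorem exists_unit_weight_ae_eq_const_mul {a : Ω → ℝ}
    (ha_meas : Measurable[m] a) (ha_nonneg : 0 ≤ᵐ[μ] a) {C : ℝ} (hC : 0 < C)
    (ha_le : ∀ᵐ x ∂μ, a x ≤ C) :
    ∃ w : Ω → ℝ, Measurable[m] w ∧ (∀ x, 0 ≤ w x ∧ w x ≤ 1) ∧
      w =ᵐ[μ] fun x => C⁻¹ * a x := by
  refine ⟨fun x => C⁻¹ * max 0 (min (a x) C), ?_, fun x => ⟨by positivity, ?_⟩, ?_⟩
  · exact (measurable_const.max (ha_meas.min measurable_const)).const_mul _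
  · rw [inv_mul_le_one₀ hC]
    exact max_le hC.le (min_le_right _ _)
  · filter_upwards [ha_nonneg, ha_le] with x h0 hC
    rw [min_eq_left hC, max_eq_right (show (0 : ℝ) ≤ a x from h0)]

end WeightedMean

/-- **Theorem 1** (Existence of a causal representation uniformly in the CATE function).
Let `a` be `𝒢`-measurable, square-integrable, with `E[a] > 0` and essentially bounded above.
Then there exists a weight function `w` (𝒢-measurable, `0 ≤ w ≤ 1` pointwise, `E[w] > 0`)
such that `E[a·τ]/E[a] = E[w·τ]/E[w]` for every 𝒢-measurable square-integrable `τ`,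
if and only if `a ≥ 0` `P`-almost surely. -/
theorem existence_uniform_causal_representation
    {Ω : Type*} {mΩ : MeasurableSpace Ω} (P : Measure Ω) [IsProbabilityMeasure P]
    (𝒢 : MeasurableSpace Ω) (h𝒢 : 𝒢 ≤ mΩ)
    (a : Ω → ℝ)
    (ha_meas : Measurable[𝒢] a)
    (ha_L2 : MemLp a 2 P)
    (ha_pos : 0 < ∫ ω, a ω ∂P)
    (ha_bdd : ∃ C : ℝ, ∀ᵐ ω ∂P, a ω ≤ C) :
    (∃ w : Ω → ℝ, Measurable[𝒢] w ∧ (∀ ω, 0 ≤ w ω ∧ w ω ≤ 1) ∧ (0 < ∫ ω, w ω ∂P) ∧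
      ∀ τ : Ω → ℝ, Measurable[𝒢] τ → MemLp τ 2 P →
        (∫ ω, a ω * τ ω ∂P) / (∫ ω, a ω ∂P) = (∫ ω, w ω * τ ω ∂P) / (∫ ω, w ω ∂P))
    ↔ (∀ᵐ ω ∂P, 0 ≤ a ω) := by
  constructor
  · rintro ⟨w, -, hw_unit, -, hw⟩
    refine ae_nonneg_of_forall_setIntegral_nonneg_of_le h𝒢 ha_meas.stronglyMeasurable
      (ha_L2.integrable one_le_two) fun s hs => ?_
    have hs' : MeasurableSet[mΩ] s := h𝒢 s hs
    have h1s_L2 : MemLp (s.indicator 1) 2 P :=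
      memLp_indicator_const 2 hs' (1 : ℝ) (.inr (measure_ne_top P s))
    exact setIntegral_nonneg_of_div_integral_eq ha_pos (ae_of_all _ fun ω => (hw_unit ω).1) hs'
      (hw _ (measurable_one.indicator hs) h1s_L2)
  · intro ha_nonneg
    obtain ⟨C, hC⟩ := ha_bdd
    have hC' : 0 < max C 1 := lt_max_of_lt_right one_pos
    have ha_le : ∀ᵐ ω ∂P, a ω ≤ max C 1 := hC.mono fun ω h => h.trans (le_max_left C 1)
    obtain ⟨w, hw_meas, hw_unit, hw_eq⟩ :=
      exists_unit_weight_ae_eq_const_mul ha_meas ha_nonneg hC' ha_le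
    have hw_int : ∫ ω, w ω ∂P = (max C 1)⁻¹ * ∫ ω, a ω ∂P := by
      rw [integral_congr_ae hw_eq, integral_const_mul]
    refine ⟨w, hw_meas, hw_unit, hw_int ▸ by positivity, fun τ _ _ => ?_⟩
    exact div_integral_eq_of_ae_eq_const_mul (inv_ne_zero hC'.ne') hw_eq τ
end

section
/- Existence of a causal representation for a given CATE function (Theorem 2): Let a, τ₀ : Ω → ℝ be 𝒢-measurable with E[a²] < ∞, E[τ₀²] < ∞ and E[a] > 0, and set μ₀ := E[a·τ₀]/E[a]. Then there exists a weight function w (𝒢-measurable, 0 ≤ w ≤ 1 pointwise, E[w] > 0) with E[w·τ₀]/E[w] = μ₀ if and only if P(τ₀ ≤ μ₀) > 0 and P(τ₀ ≥ μ₀) > 0 (i.e., μ₀ lies in the set S(τ₀) of points weakly between the essential infimum and essential supremum of τ₀). -/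
/-!
Write `f := τ₀ - μ₀`; for a weight `w` with `E[w] > 0`, the condition `E[w τ₀] / E[w] = μ₀`
says `E[w f] = 0`. If `f > 0` almost surely, then `w f ≥ 0` has zero mean, forcing `w = 0`
almost surely; so `P(f ≤ 0) > 0`, and symmetrically `P(f ≥ 0) > 0`. Conversely, if `E[f] ≥ 0`
and `P(f ≤ 0) > 0`, the weight equal to `1` on `{f ≤ 0}` and to `t := E[f⁻] / E[f⁺] ∈ [0, 1]`
elsewhere balances the negative and positive parts of `f` (`0 / 0 = 0` is harmless, since
`E[f⁺] = 0` forces `E[f⁻] = 0`); the case `E[f] ≤ 0` follows by replacing `f` with `-f`.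
-/

open MeasureTheory

namespace MeasureTheory

variable {Ω : Type*} {m mΩ : MeasurableSpace Ω} {μ : Measure Ω}

lemma Integrable.unit_weight_mul {w g : Ω → ℝ} (hg : Integrable g μ)
    (hw : AEStronglyMeasurable w μ) (hw01 : ∀ x, 0 ≤ w x ∧ w x ≤ 1) :
    Integrable (fun x => w x * g x) μ :=
  hg.bdd_mul hw (c := 1) (ae_of_all _ fun x => by
    rw [Real.norm_eq_abs, abs_of_nonneg (hw01 x).1]; exact (hw01 x).2)

lemma integral_mul_div_integral_eq_iff [IsFiniteMeasure μ] {w g : Ω → ℝ}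
    (hw : AEStronglyMeasurable w μ) (hw01 : ∀ x, 0 ≤ w x ∧ w x ≤ 1) (hg : Integrable g μ)
    (hw0 : ∫ x, w x ∂μ ≠ 0) (c : ℝ) :
    (∫ x, w x * g x ∂μ) / (∫ x, w x ∂μ) = c ↔ ∫ x, w x * (g x - c) ∂μ = 0 := by
  have hw_int : Integrable w μ := by
    simpa only [mul_one] using (integrable_const (1 : ℝ)).unit_weight_mul hw hw01
  have hsplit : ∫ x, w x * (g x - c) ∂μ = ∫ x, w x * g x ∂μ - c * ∫ x, w x ∂μ := by
    simp_rw [mul_sub, mul_comm _ c]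
    rw [integral_sub (hg.unit_weight_mul hw hw01) (hw_int.const_mul c), integral_const_mul]
  rw [hsplit, div_eq_iff hw0, sub_eq_zero]

lemma measure_nonpos_pos_of_integral_mul_eq_zero {w f : Ω → ℝ} (hw : 0 ≤ᵐ[μ] w)
    (hw0 : ∫ x, w x ∂μ ≠ 0) (hwf : Integrable (fun x => w x * f x) μ)
    (h : ∫ x, w x * f x ∂μ = 0) : 0 < μ {x | f x ≤ 0} := by
  by_contra! hnull
  have hf_pos : ∀ᵐ x ∂μ, 0 < f x := by
    rw [ae_iff]
    simpa only [not_lt, nonpos_iff_eq_zero] using hnull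
  have hwf_nonneg : 0 ≤ᵐ[μ] fun x => w x * f x := by
    filter_upwards [hw, hf_pos] with x hwx hfx
    exact mul_nonneg hwx hfx.le
  have hwf_zero := (integral_eq_zero_iff_of_nonneg_ae hwf_nonneg hwf).mp h
  have hw_zero : w =ᵐ[μ] 0 := by
    filter_upwards [hwf_zero, hf_pos] with x hx hfx
    exact (mul_eq_zero.mp hx).resolve_right hfx.ne'
  exact hw0 (integral_eq_zero_of_ae hw_zero)

lemma measure_nonneg_pos_of_integral_mul_eq_zero {w f : Ω → ℝ} (hw : 0 ≤ᵐ[μ] w)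
    (hw0 : ∫ x, w x ∂μ ≠ 0) (hwf : Integrable (fun x => w x * f x) μ)
    (h : ∫ x, w x * f x ∂μ = 0) : 0 < μ {x | 0 ≤ f x} := by
  have := measure_nonpos_pos_of_integral_mul_eq_zero (f := -f) hw hw0
    (by simpa only [Pi.neg_apply, mul_neg] using hwf.fun_neg)
    (by simp only [Pi.neg_apply, mul_neg, integral_neg, h, neg_zero])
  simpa only [Pi.neg_apply, neg_nonpos] using this

variable [IsFiniteMeasure μ] {f : Ω → ℝ}

lemma exists_weight_integral_mul_eq_zero_of_integral_nonneg (hm : m ≤ mΩ)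
    (hf_meas : Measurable[m] f) (hf : Integrable f μ) (hf_mean : 0 ≤ ∫ x, f x ∂μ)
    (hS_pos : 0 < μ {x | f x ≤ 0}) :
    ∃ w : Ω → ℝ, Measurable[m] w ∧ (∀ x, 0 ≤ w x ∧ w x ≤ 1) ∧ 0 < ∫ x, w x ∂μ ∧
      ∫ x, w x * f x ∂μ = 0 := by
  set S := {x | f x ≤ 0}
  have hS_m : MeasurableSet[m] S := hf_meas measurableSet_Iic
  have hS : MeasurableSet S := hm _ hS_m
  set negMass := -∫ x in S, f x ∂μ
  set posMass := ∫ x in Sᶜ, f x ∂μ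
  have hneg : 0 ≤ negMass := neg_nonneg.mpr (setIntegral_nonpos hS fun x hx => hx)
  have hpos : 0 ≤ posMass :=
    setIntegral_nonneg hS.compl fun x hx => le_of_lt (not_le.mp hx)
  have hneg_le : negMass ≤ posMass := by
    have := integral_add_compl hS hf
    linarith
  set t := negMass / posMass
  have ht : 0 ≤ t := div_nonneg hneg hpos
  have ht_mul : t * posMass = negMass := by
    rcases hpos.eq_or_lt with h0 | h0
    · rw [← h0, mul_zero]; linarith
    · exact div_mul_cancel₀ negMass h0.ne'
  refine ⟨S.piecewise (fun _ => 1) fun _ => t,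
    Measurable.piecewise hS_m measurable_const measurable_const, fun x => ?_, ?_, ?_⟩
  · by_cases hx : x ∈ S <;> simp only [Set.piecewise, hx, if_true, if_false]
    · exact ⟨zero_le_one, le_rfl⟩
    · exact ⟨ht, div_le_one_of_le₀ hneg_le hpos⟩
  · rw [integral_piecewise hS (integrable_const 1).integrableOn
      (integrable_const t).integrableOn, setIntegral_const, setIntegral_const]
    have hS_real : 0 < μ.real S := ENNReal.toReal_pos hS_pos.ne' (measure_ne_top μ S)
    simp only [smul_eq_mul, mul_one]
    exact add_pos_of_pos_of_nonneg hS_real (mul_nonneg measureReal_nonneg ht)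
  · have hwf : (fun x => S.piecewise (fun _ => 1) (fun _ => t) x * f x) =
        S.piecewise f fun x => t * f x := by
      ext x; by_cases hx : x ∈ S <;> simp [Set.piecewise, hx]
    rw [hwf, integral_piecewise hS hf.integrableOn (hf.const_mul t).integrableOn,
      integral_const_mul, ht_mul]
    ring

lemma exists_weight_integral_mul_eq_zero (hm : m ≤ mΩ) (hf_meas : Measurable[m] f)
    (hf : Integrable f μ) (hle : 0 < μ {x | f x ≤ 0}) (hge : 0 < μ {x | 0 ≤ f x}) :
    ∃ w : Ω → ℝ, Measurable[m] w ∧ (∀ x, 0 ≤ w x ∧ w x ≤ 1) ∧ 0 < ∫ x, w x ∂μ ∧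
      ∫ x, w x * f x ∂μ = 0 := by
  rcases le_total 0 (∫ x, f x ∂μ) with h | h
  · exact exists_weight_integral_mul_eq_zero_of_integral_nonneg hm hf_meas hf h hle
  · obtain ⟨w, hw_meas, hw01, hw_pos, hwf⟩ :=
      exists_weight_integral_mul_eq_zero_of_integral_nonneg (f := -f) hm hf_meas.neg hf.neg
        (by rwa [integral_neg', neg_nonneg]) (by simpa only [Pi.neg_apply, neg_nonpos] using hge)
    refine ⟨w, hw_meas, hw01, hw_pos, ?_⟩
    simpa only [Pi.neg_apply, mul_neg, integral_neg, neg_eq_zero] using hwf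

end MeasureTheory

theorem existence_causal_representation_given_tau_general
    {Ω : Type*} {mΩ : MeasurableSpace Ω} (P : Measure Ω) [IsProbabilityMeasure P]
    (𝒢 : MeasurableSpace Ω) (h𝒢 : 𝒢 ≤ mΩ)
    (τ₀ : Ω → ℝ)
    (hτ_meas : Measurable[𝒢] τ₀)
    (hτ_L2 : MemLp τ₀ 2 P)
    (μ₀ : ℝ) :
    (∃ w : Ω → ℝ, Measurable[𝒢] w ∧ (∀ ω, 0 ≤ w ω ∧ w ω ≤ 1) ∧ (0 < ∫ ω, w ω ∂P) ∧
      (∫ ω, w ω * τ₀ ω ∂P) / (∫ ω, w ω ∂P) = μ₀)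
    ↔ (0 < P {ω | τ₀ ω ≤ μ₀} ∧ 0 < P {ω | μ₀ ≤ τ₀ ω}) := by
  have hτ : Integrable τ₀ P := hτ_L2.integrable one_le_two
  have hf : Integrable (fun ω => τ₀ ω - μ₀) P := hτ.sub (integrable_const μ₀)
  constructor
  · rintro ⟨w, hw_meas, hw01, hw_pos, hwμ⟩
    have hw : AEStronglyMeasurable[mΩ] w P := (hw_meas.mono h𝒢 le_rfl).aestronglyMeasurable
    have h0 := (integral_mul_div_integral_eq_iff hw hw01 hτ hw_pos.ne' μ₀).mp hwμ
    have hw_nonneg : 0 ≤ᵐ[P] w := ae_of_all _ fun ω => (hw01 ω).1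
    have hwf := hf.unit_weight_mul hw hw01
    exact ⟨by simpa only [sub_nonpos] using
        measure_nonpos_pos_of_integral_mul_eq_zero hw_nonneg hw_pos.ne' hwf h0,
      by simpa only [sub_nonneg] using
        measure_nonneg_pos_of_integral_mul_eq_zero hw_nonneg hw_pos.ne' hwf h0⟩
  · rintro ⟨hle, hge⟩
    obtain ⟨w, hw_meas, hw01, hw_pos, h0⟩ := exists_weight_integral_mul_eq_zero h𝒢
      (hτ_meas.sub_const μ₀) hf (by simpa only [sub_nonpos]) (by simpa only [sub_nonneg])
    have hw : AEStronglyMeasurable[mΩ] w P := (hw_meas.mono h𝒢 le_rfl).aestronglyMeasurable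
    exact ⟨w, hw_meas, hw01, hw_pos,
      (integral_mul_div_integral_eq_iff hw hw01 hτ hw_pos.ne' μ₀).mpr h0⟩

/-- **Theorem 2** (Existence of a causal representation for a given CATE function).
With `μ₀ := E[a·τ₀]/E[a]`, a weight function `w` with `E[w·τ₀]/E[w] = μ₀` exists
if and only if `P(τ₀ ≤ μ₀) > 0` and `P(τ₀ ≥ μ₀) > 0`. -/
theorem existence_causal_representation_given_tau
    {Ω : Type*} {mΩ : MeasurableSpace Ω} (P : Measure Ω) [IsProbabilityMeasure P]
    (𝒢 : MeasurableSpace Ω) (h𝒢 : 𝒢 ≤ mΩ)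
    (a τ₀ : Ω → ℝ)
    (ha_meas : Measurable[𝒢] a) (hτ_meas : Measurable[𝒢] τ₀)
    (ha_L2 : MemLp a 2 P) (hτ_L2 : MemLp τ₀ 2 P)
    (ha_pos : 0 < ∫ ω, a ω ∂P)
    (μ₀ : ℝ) (hμ₀ : μ₀ = (∫ ω, a ω * τ₀ ω ∂P) / (∫ ω, a ω ∂P)) :
    (∃ w : Ω → ℝ, Measurable[𝒢] w ∧ (∀ ω, 0 ≤ w ω ∧ w ω ≤ 1) ∧ (0 < ∫ ω, w ω ∂P) ∧
      (∫ ω, w ω * τ₀ ω ∂P) / (∫ ω, w ω ∂P) = μ₀)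
    ↔ (0 < P {ω | τ₀ ω ≤ μ₀} ∧ 0 < P {ω | μ₀ ≤ τ₀ ω}) :=
  existence_causal_representation_given_tau_general P 𝒢 h𝒢 τ₀ hτ_meas hτ_L2 μ₀
end

section
/- Sharp measure of internal validity uniformly in the CATE function (Theorem 3): Let a : Ω → ℝ be 𝒢-measurable with E[a²] < ∞, E[a] > 0, and a_max := essSup(a) < ∞. If a ≥ 0 P-almost surely, then the supremum of E[w] over all weight functions w (𝒢-measurable, 0 ≤ w ≤ 1 pointwise, E[w] > 0) satisfying E[a·τ]/E[a] = E[w·τ]/E[w] for every 𝒢-measurable τ with E[τ²] < ∞, equals E[a]/a_max, and this supremum is attained by w = a/a_max. If P(a < 0) > 0, then no such weight function exists. -/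
/-!
If `w` represents the estimand for every square-integrable `τ`, then `a / E[a]` and `w / E[w]`
induce the same linear functional on `L²(𝒢)`; testing against their difference shows
`a = (E[a] / E[w]) w` almost surely. Hence `a ≥ 0` a.s. is necessary, and `w ≤ 1` forces
`a ≤ E[a] / E[w]` a.s., i.e. `E[w] ≤ E[a] / a_max`, with equality for `w = a / a_max`.
-/

open MeasureTheory Filter

section
variable {Ω : Type*} {m m0 : MeasurableSpace Ω} {μ : Measure Ω}

theorem ae_eq_of_forall_integral_mul_eq {f g : Ω → ℝ} (hf : Measurable[m] f)
    (hg : Measurable[m] g) (hf2 : MemLp f 2 μ) (hg2 : MemLp g 2 μ)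
    (h : ∀ τ : Ω → ℝ, Measurable[m] τ → MemLp τ 2 μ →
      ∫ ω, f ω * τ ω ∂μ = ∫ ω, g ω * τ ω ∂μ) :
    f =ᵐ[μ] g := by
  have hd2 : MemLp (f - g) 2 μ := hf2.sub hg2
  have hsq : ∫ ω, (f - g) ω * (f - g) ω ∂μ = 0 := by
    have hfd : Integrable (fun ω => f ω * (f - g) ω) μ := hf2.integrable_mul hd2
    have hgd : Integrable (fun ω => g ω * (f - g) ω) μ := hg2.integrable_mul hd2
    rw [← sub_eq_zero.2 (h _ (hf.sub hg) hd2), ← integral_sub hfd hgd]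
    simp only [Pi.sub_apply, sub_mul]
  have hsq0 : (f - g) * (f - g) =ᵐ[μ] 0 :=
    (integral_eq_zero_iff_of_nonneg (fun ω => mul_self_nonneg _) (hd2.integrable_mul hd2)).1 hsq
  filter_upwards [hsq0] with ω hω
  exact sub_eq_zero.1 (mul_self_eq_zero.1 hω)

theorem div_integral_ae_eq_of_forall_weighted_mean_eq {a b : Ω → ℝ} (ha : Measurable[m] a)
    (hb : Measurable[m] b) (ha2 : MemLp a 2 μ) (hb2 : MemLp b 2 μ)
    (h : ∀ τ : Ω → ℝ, Measurable[m] τ → MemLp τ 2 μ →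
      (∫ ω, a ω * τ ω ∂μ) / (∫ ω, a ω ∂μ) = (∫ ω, b ω * τ ω ∂μ) / (∫ ω, b ω ∂μ)) :
    (fun ω => a ω / ∫ ω', a ω' ∂μ) =ᵐ[μ] fun ω => b ω / ∫ ω', b ω' ∂μ := by
  refine ae_eq_of_forall_integral_mul_eq (ha.div_const _) (hb.div_const _)
    (by simpa only [div_eq_mul_inv] using ha2.mul_const _)
    (by simpa only [div_eq_mul_inv] using hb2.mul_const _) fun τ hτ hτ2 => ?_
  simpa only [div_mul_eq_mul_div, integral_div] using h τ hτ hτ2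

theorem weighted_mean_congr_div_const {a w : Ω → ℝ} {c : ℝ} (hw : w =ᵐ[μ] fun ω => a ω / c)
    (hc : c ≠ 0) (τ : Ω → ℝ) :
    (∫ ω, w ω * τ ω ∂μ) / (∫ ω, w ω ∂μ) = (∫ ω, a ω * τ ω ∂μ) / (∫ ω, a ω ∂μ) := by
  have hwτ : (fun ω => w ω * τ ω) =ᵐ[μ] fun ω => a ω * τ ω / c := by
    filter_upwards [hw] with ω hω
    rw [hω, div_mul_eq_mul_div]
  rw [integral_congr_ae hwτ, integral_congr_ae hw, integral_div, integral_div,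
    div_div_div_cancel_right₀ hc]

theorem exists_weight_ae_eq_div {a : Ω → ℝ} {M : ℝ} (ha : Measurable[m] a) (hM : 0 < M)
    (h : ∀ᵐ ω ∂μ, 0 ≤ a ω ∧ a ω ≤ M) :
    ∃ w : Ω → ℝ, Measurable[m] w ∧ (∀ ω, 0 ≤ w ω ∧ w ω ≤ 1) ∧ w =ᵐ[μ] fun ω => a ω / M := by
  refine ⟨fun ω => max 0 (min (a ω / M) 1),
    measurable_const.max ((ha.div_const _).min measurable_const),
    fun ω => ⟨le_max_left _ _, max_le zero_le_one (min_le_right _ _)⟩, ?_⟩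
  filter_upwards [h] with ω ⟨h0, h1⟩
  rw [min_eq_left ((div_le_one hM).2 h1), max_eq_right (div_nonneg h0 hM.le)]

theorem ae_nonneg_and_le_of_forall_weighted_mean_eq [IsFiniteMeasure μ] (hm : m ≤ m0)
    {a w : Ω → ℝ} (ha : Measurable[m] a) (ha2 : MemLp a 2 μ) (ha_pos : 0 < ∫ ω, a ω ∂μ)
    (hw : Measurable[m] w) (hw01 : ∀ ω, 0 ≤ w ω ∧ w ω ≤ 1) (hw_pos : 0 < ∫ ω, w ω ∂μ)
    (h : ∀ τ : Ω → ℝ, Measurable[m] τ → MemLp τ 2 μ →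
      (∫ ω, a ω * τ ω ∂μ) / (∫ ω, a ω ∂μ) = (∫ ω, w ω * τ ω ∂μ) / (∫ ω, w ω ∂μ)) :
    ∀ᵐ ω ∂μ, 0 ≤ a ω ∧ a ω ≤ (∫ ω, a ω ∂μ) / ∫ ω, w ω ∂μ := by
  have hw2 : MemLp w 2 μ :=
    memLp_of_bounded (a := 0) (b := 1) (ae_of_all _ fun ω => hw01 ω)
      (hw.mono hm le_rfl).aestronglyMeasurable 2
  filter_upwards [div_integral_ae_eq_of_forall_weighted_mean_eq ha hw ha2 hw2 h]
    with ω hω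
  have ha_eq : a ω = (∫ ω, a ω ∂μ) / (∫ ω, w ω ∂μ) * w ω := by
    rw [div_eq_div_iff ha_pos.ne' hw_pos.ne'] at hω
    field_simp
    linarith
  have hc : 0 < (∫ ω, a ω ∂μ) / ∫ ω, w ω ∂μ := div_pos ha_pos hw_pos
  rw [ha_eq]
  exact ⟨mul_nonneg hc.le (hw01 ω).1, mul_le_of_le_one_right hc.le (hw01 ω).2⟩

end

/-- **Theorem 3** (Sharp measure of internal validity uniformly in the CATE function).
If `a ≥ 0` a.s., the supremum of `E[w]` over weight functions `w` representing the
weighted estimand uniformly in `τ` equals `E[a]/a_max` and is attained by `w = a/a_max`;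
if `P(a < 0) > 0`, no representing weight function exists. -/
theorem internal_validity_uniform
    {Ω : Type*} {mΩ : MeasurableSpace Ω} (P : Measure Ω) [IsProbabilityMeasure P]
    (𝒢 : MeasurableSpace Ω) (h𝒢 : 𝒢 ≤ mΩ)
    (a : Ω → ℝ)
    (ha_meas : Measurable[𝒢] a)
    (ha_L2 : MemLp a 2 P)
    (ha_pos : 0 < ∫ ω, a ω ∂P)
    (ha_bdd : ∃ C : ℝ, ∀ᵐ ω ∂P, a ω ≤ C)
    (a_max : ℝ) (ha_max : a_max = essSup a P) :
    ((∀ᵐ ω ∂P, 0 ≤ a ω) →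
      -- the supremum is attained by (a version of) `w = a / a_max` ...
      (∃ w : Ω → ℝ, Measurable[𝒢] w ∧ (∀ ω, 0 ≤ w ω ∧ w ω ≤ 1) ∧ (0 < ∫ ω, w ω ∂P) ∧
        (∀ τ : Ω → ℝ, Measurable[𝒢] τ → MemLp τ 2 P →
          (∫ ω, a ω * τ ω ∂P) / (∫ ω, a ω ∂P) = (∫ ω, w ω * τ ω ∂P) / (∫ ω, w ω ∂P)) ∧
        (w =ᵐ[P] fun ω => a ω / a_max) ∧
        (∫ ω, w ω ∂P) = (∫ ω, a ω ∂P) / a_max) ∧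
      -- ... and `E[a]/a_max` is an upper bound for `E[w]` over all representing weights
      (∀ w : Ω → ℝ, Measurable[𝒢] w → (∀ ω, 0 ≤ w ω ∧ w ω ≤ 1) → (0 < ∫ ω, w ω ∂P) →
        (∀ τ : Ω → ℝ, Measurable[𝒢] τ → MemLp τ 2 P →
          (∫ ω, a ω * τ ω ∂P) / (∫ ω, a ω ∂P) = (∫ ω, w ω * τ ω ∂P) / (∫ ω, w ω ∂P)) →
        (∫ ω, w ω ∂P) ≤ (∫ ω, a ω ∂P) / a_max))
    ∧
    (0 < P {ω | a ω < 0} →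
      ¬ (∃ w : Ω → ℝ, Measurable[𝒢] w ∧ (∀ ω, 0 ≤ w ω ∧ w ω ≤ 1) ∧ (0 < ∫ ω, w ω ∂P) ∧
        ∀ τ : Ω → ℝ, Measurable[𝒢] τ → MemLp τ 2 P →
          (∫ ω, a ω * τ ω ∂P) / (∫ ω, a ω ∂P) = (∫ ω, w ω * τ ω ∂P) / (∫ ω, w ω ∂P))) := by
  have hle_max : ∀ᵐ ω ∂P, a ω ≤ a_max := by
    obtain ⟨C, hC⟩ := ha_bdd
    exact ha_max ▸ ae_le_essSup ⟨C, hC⟩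
  have hmax_pos : 0 < a_max := ha_pos.trans_le <| by
    simpa using integral_mono_ae (ha_L2.integrable one_le_two) (integrable_const a_max) hle_max
  refine ⟨fun ha_nn => ⟨?_, fun w hw hw01 hw_pos hrep => ?_⟩, ?_⟩
  · obtain ⟨w, hw, hw01, hwa⟩ := exists_weight_ae_eq_div ha_meas hmax_pos (ha_nn.and hle_max)
    have hw_int : ∫ ω, w ω ∂P = (∫ ω, a ω ∂P) / a_max := by
      rw [integral_congr_ae hwa, integral_div]
    exact ⟨w, hw, hw01, hw_int ▸ div_pos ha_pos hmax_pos,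
      fun τ _ _ => (weighted_mean_congr_div_const hwa hmax_pos.ne' τ).symm, hwa, hw_int⟩
  · have hbound := ae_nonneg_and_le_of_forall_weighted_mean_eq h𝒢 ha_meas ha_L2 ha_pos hw hw01
      hw_pos hrep
    have hmax_le : a_max ≤ (∫ ω, a ω ∂P) / ∫ ω, w ω ∂P :=
      ha_max ▸ essSup_le_of_ae_le _ (hbound.mono fun _ h => h.2)
        (isCoboundedUnder_le_of_eventually_le _ ha_nn)
    rw [le_div_iff₀ hw_pos] at hmax_le
    rwa [le_div_iff₀ hmax_pos, mul_comm]
  · rintro hneg ⟨w, hw, hw01, hw_pos, hrep⟩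
    have hnn : ∀ᵐ ω ∂P, 0 ≤ a ω :=
      (ae_nonneg_and_le_of_forall_weighted_mean_eq h𝒢 ha_meas ha_L2 ha_pos hw hw01 hw_pos
        hrep).mono fun _ h => h.1
    exact hneg.ne' (by simpa only [not_le] using ae_iff.1 hnn)
end

section
/- Causal representation under linear CATEs (Proposition 4): Let X : Ω → ℝ^d be a random vector taking finitely many values, with support S := {x ∈ ℝ^d : P(X = x) > 0}, and let a : ℝ^d → ℝ satisfy E[a(X)] > 0. Then there exists w : ℝ^d → [0,1] with E[w(X)] > 0 such that E[a(X)·(c + d·X)]/E[a(X)] = E[w(X)·(c + d·X)]/E[w(X)] for every c ∈ ℝ and d ∈ ℝ^d, if and only if the vector E[a(X)·X]/E[a(X)] lies in the convex hull of S. -/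
open MeasureTheory

/-!
The weighted mean of an affine function `c + dv ⬝ x` is `c + dv ⬝ ν`, where `ν` is the weighted
mean of `X`; so a weight `w` reproduces every affine estimand of `a` exactly when the `w`-mean of
`X` equals the `a`-mean. As `X` is finitely valued, the `w`-mean is the center of mass of the
support with weights `P(X = x) w(x)`, hence lies in its convex hull. Conversely, a convex
combination `∑ t_x x` of support points is the `w`-mean for `w(x) = m t_x / P(X = x)`, where the
least positive mass `m` keeps `w ≤ 1`.
-/

section FiniteRange

variable {Ω α E : Type*} {mΩ : MeasurableSpace Ω} [NormedAddCommGroup E]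
  (P : Measure Ω) [IsFiniteMeasure P] {X : Ω → α}

theorem integrable_comp_of_finite_range [MeasurableSpace α] [MeasurableSingletonClass α]
    (hX : Measurable X) (hfin : (Set.range X).Finite) (f : α → E) :
    Integrable (fun ω => f (X ω)) P :=
  let Xₛ : SimpleFunc Ω α := ⟨X, fun x => hX (measurableSet_singleton x), hfin⟩
  (Xₛ.map f).integrable_of_isFiniteMeasure

theorem integral_comp_eq_sum [MeasurableSpace α] [MeasurableSingletonClass α]
    [NormedSpace ℝ E] [CompleteSpace E] (hX : Measurable X)
    (hfin : (Set.range X).Finite) (f : α → E) :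
    ∫ ω, f (X ω) ∂P = ∑ x ∈ hfin.toFinset, P.real (X ⁻¹' {x}) • f x := by
  have h_indicator : (fun ω => f (X ω)) =
      fun ω => ∑ x ∈ hfin.toFinset, (X ⁻¹' {x}).indicator (fun _ => f x) ω := by
    ext ω
    rw [Finset.sum_eq_single_of_mem (X ω) (by simp)]
    · simp
    · intro x _ hx
      exact Set.indicator_of_notMem (fun h => hx h.symm) _
  rw [h_indicator, integral_finsetSum]
  · simp only [integral_indicator_const _ (hX (measurableSet_singleton _))]
  · exact fun x _ => (integrable_const (f x)).indicator (hX (measurableSet_singleton x))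

theorem setOf_measure_preimage_pos_eq_filter (hfin : (Set.range X).Finite) :
    {x | 0 < P (X ⁻¹' {x})} = ↑(hfin.toFinset.filter fun x => 0 < P.real (X ⁻¹' {x})) := by
  ext x
  simp only [Set.mem_ofPred_eq, Finset.coe_filter, Set.Finite.mem_toFinset, measureReal_def,
    ENNReal.toReal_pos_iff, measure_lt_top, and_true, iff_and_self]
  intro hx
  obtain ⟨ω, hω⟩ := nonempty_of_measure_ne_zero hx.ne'
  exact ⟨ω, hω⟩

end FiniteRange

theorem integral_mul_affine_div {Ω ι : Type*} {mΩ : MeasurableSpace Ω} [Fintype ι] {μ : Measure Ω}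
    {g : Ω → ℝ} {Y : Ω → ι → ℝ} (hg : Integrable g μ) (hgY : Integrable (fun ω => g ω • Y ω) μ)
    (hg0 : ∫ ω, g ω ∂μ ≠ 0) (c : ℝ) (v : ι → ℝ) :
    (∫ ω, g ω * (c + ∑ i, v i * Y ω i) ∂μ) / ∫ ω, g ω ∂μ =
      c + ∑ i, v i * ((∫ ω, g ω ∂μ)⁻¹ • ∫ ω, g ω • Y ω ∂μ) i := by
  have hcoord (i : ι) : Integrable (fun ω => g ω * Y ω i) μ := hgY.eval i
  have hsum : ∫ ω, g ω * (c + ∑ i, v i * Y ω i) ∂μ =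
      (∫ ω, g ω ∂μ) * c + ∑ i, v i * ∫ ω, g ω * Y ω i ∂μ := by
    simp_rw [mul_add, Finset.mul_sum, mul_left_comm (g _) (v _)]
    rw [integral_add (hg.mul_const c) (integrable_finsetSum _ fun i _ => (hcoord i).const_mul _),
      integral_finsetSum _ fun i _ => (hcoord i).const_mul _, integral_mul_const]
    simp_rw [integral_const_mul]
  simp only [hsum, Pi.smul_apply, eval_integral (f := fun ω => g ω • Y ω) hcoord, smul_eq_mul]
  rw [add_div, mul_div_cancel_left₀ c hg0, Finset.sum_div]
  congr 1
  exact Finset.sum_congr rfl fun i _ => by ring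

theorem forall_affine_eq_iff {ι : Type*} [Fintype ι] {u v : ι → ℝ} :
    (∀ (c : ℝ) (dv : ι → ℝ), c + ∑ i, dv i * u i = c + ∑ i, dv i * v i) ↔ u = v := by
  classical
  refine ⟨fun h => funext fun j => ?_, by rintro rfl _ _; rfl⟩
  simpa [Pi.single_apply] using h 0 (Pi.single j 1)

theorem inv_integral_smul_integral_eq_centerMass {Ω E : Type*} {mΩ : MeasurableSpace Ω}
    (P : Measure Ω) [IsFiniteMeasure P] [NormedAddCommGroup E] [NormedSpace ℝ E] [CompleteSpace E]
    [MeasurableSpace E] [MeasurableSingletonClass E] {X : Ω → E} (hX : Measurable X)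
    (hfin : (Set.range X).Finite) (f : E → ℝ) :
    (∫ ω, f (X ω) ∂P)⁻¹ • ∫ ω, f (X ω) • X ω ∂P =
      hfin.toFinset.centerMass (fun x => P.real (X ⁻¹' {x}) * f x) id := by
  rw [Finset.centerMass, integral_comp_eq_sum P hX hfin f,
    integral_comp_eq_sum P hX hfin fun x => f x • x]
  simp only [smul_eq_mul, smul_smul, id]

section CenterMass

variable {E : Type*} [AddCommGroup E] [Module ℝ E] {S : Finset E} {p : E → ℝ}

theorem centerMass_mul_mem_convexHull_filter_pos {w : E → ℝ} (hp : ∀ x ∈ S, 0 ≤ p x)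
    (hw : ∀ x ∈ S, 0 ≤ w x) (hpos : 0 < ∑ x ∈ S, p x * w x) :
    S.centerMass (fun x => p x * w x) id ∈ convexHull ℝ ↑(S.filter fun x => 0 < p x) := by
  have hT : S.filter (fun x => 0 < p x) ⊆ S := Finset.filter_subset _ S
  have hvanish : ∀ x ∈ S, x ∉ S.filter (fun x => 0 < p x) → p x * w x = 0 := by
    intro x hx hxT
    have hpx : p x = 0 := (not_lt.1 fun h => hxT (Finset.mem_filter.2 ⟨hx, h⟩)).antisymm (hp x hx)
    rw [hpx, zero_mul]
  rw [← Finset.centerMass_subset id hT hvanish]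
  refine Finset.centerMass_id_mem_convexHull _
    (fun x hx => mul_nonneg (hp x (hT hx)) (hw x (hT hx))) ?_
  rwa [Finset.sum_subset hT hvanish]

theorem exists_weight_centerMass_eq_of_mem_convexHull {ν : E}
    (hν : ν ∈ convexHull ℝ ↑(S.filter fun x => 0 < p x)) :
    ∃ w : E → ℝ, (∀ x, 0 ≤ w x ∧ w x ≤ 1) ∧ 0 < ∑ x ∈ S, p x * w x ∧
      S.centerMass (fun x => p x * w x) id = ν := by
  classical
  set T := S.filter fun x => 0 < p x
  rw [Finset.convexHull_eq] at hν
  obtain ⟨t, ht0, ht1, rfl⟩ := hν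
  have hTS : T ⊆ S := Finset.filter_subset _ S
  have hpT : ∀ x ∈ T, 0 < p x := fun x hx => (Finset.mem_filter.1 hx).2
  have hT : T.Nonempty := Finset.nonempty_of_sum_ne_zero (ht1 ▸ one_ne_zero)
  set m := T.inf' hT p
  have hm : 0 < m := (Finset.lt_inf'_iff hT).2 hpT
  set w : E → ℝ := fun x => if x ∈ T then m * t x / p x else 0
  have hpw : ∀ x ∈ T, p x * w x = m * t x := fun x hx => by
    simp only [w, if_pos hx]
    field_simp [(hpT x hx).ne']
  have hoff : ∀ x ∈ S, x ∉ T → p x * w x = 0 := fun x _ hx => by simp [w, hx]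
  have hw01 (x : E) : 0 ≤ w x ∧ w x ≤ 1 := by
    by_cases hx : x ∈ T
    · have htx : t x ≤ 1 := ht1 ▸ Finset.single_le_sum ht0 hx
      simp only [w, if_pos hx]
      refine ⟨div_nonneg (mul_nonneg hm.le (ht0 x hx)) (hpT x hx).le, (div_le_one (hpT x hx)).2 ?_⟩
      simpa using mul_le_mul (T.inf'_le p hx) htx (ht0 x hx) (hpT x hx).le
    · simp [w, hx]
  have hsum : ∑ x ∈ S, p x * w x = m := by
    rw [← Finset.sum_subset hTS hoff, Finset.sum_congr rfl hpw, ← Finset.mul_sum, ht1, mul_one]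
  refine ⟨w, hw01, hsum ▸ hm, ?_⟩
  rw [← Finset.centerMass_subset id hTS hoff, Finset.centerMass_congr_weights hpw]
  exact Finset.centerMass_smul_left T id hm.ne'

theorem exists_weight_centerMass_eq_iff_mem_convexHull (hp : ∀ x ∈ S, 0 ≤ p x) {ν : E} :
    (∃ w : E → ℝ, (∀ x, 0 ≤ w x ∧ w x ≤ 1) ∧ 0 < ∑ x ∈ S, p x * w x ∧
      S.centerMass (fun x => p x * w x) id = ν) ↔ ν ∈ convexHull ℝ ↑(S.filter fun x => 0 < p x) :=
  ⟨fun ⟨_, hw, hpos, hν⟩ =>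
    hν ▸ centerMass_mul_mem_convexHull_filter_pos hp (fun x _ => (hw x).1) hpos,
    exists_weight_centerMass_eq_of_mem_convexHull⟩

end CenterMass

/-- **Proposition 4** (Causal representation under linear CATEs).
For a finitely supported covariate `X : Ω → ℝ^d` and a weight function `a` with
`E[a(X)] > 0`, there exists `w : ℝ^d → [0,1]` with `E[w(X)] > 0` matching the weighted
estimand on all affine CATE functions `x ↦ c + d·x` if and only if
`E[a(X)·X]/E[a(X)]` lies in the convex hull of the support of `X`. -/
theorem causal_representation_linear_CATEs
    {Ω : Type*} {mΩ : MeasurableSpace Ω} (P : Measure Ω) [IsProbabilityMeasure P]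
    {d : ℕ} (X : Ω → (Fin d → ℝ))
    (hX_meas : Measurable X)
    (hX_fin : (Set.range X).Finite)
    (a : (Fin d → ℝ) → ℝ)
    (ha_pos : 0 < ∫ ω, a (X ω) ∂P) :
    (∃ w : (Fin d → ℝ) → ℝ, (∀ x, 0 ≤ w x ∧ w x ≤ 1) ∧ (0 < ∫ ω, w (X ω) ∂P) ∧
      ∀ (c : ℝ) (dv : Fin d → ℝ),
        (∫ ω, a (X ω) * (c + ∑ i, dv i * X ω i) ∂P) / (∫ ω, a (X ω) ∂P) =
        (∫ ω, w (X ω) * (c + ∑ i, dv i * X ω i) ∂P) / (∫ ω, w (X ω) ∂P))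
    ↔ (∫ ω, a (X ω) ∂P)⁻¹ • (∫ ω, a (X ω) • X ω ∂P) ∈
        convexHull ℝ {x : Fin d → ℝ | 0 < P (X ⁻¹' {x})} := by
  have hintegral (f : (Fin d → ℝ) → ℝ) :
      ∫ ω, f (X ω) ∂P = ∑ x ∈ hX_fin.toFinset, P.real (X ⁻¹' {x}) * f x :=
    integral_comp_eq_sum P hX_meas hX_fin f
  have hmean (f : (Fin d → ℝ) → ℝ) :
      (∫ ω, f (X ω) ∂P)⁻¹ • ∫ ω, f (X ω) • X ω ∂P
        = hX_fin.toFinset.centerMass (fun x => P.real (X ⁻¹' {x}) * f x) id :=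
    inv_integral_smul_integral_eq_centerMass P hX_meas hX_fin f
  have hratio (f : (Fin d → ℝ) → ℝ) (hf : ∫ ω, f (X ω) ∂P ≠ 0) := integral_mul_affine_div
    (integrable_comp_of_finite_range P hX_meas hX_fin f)
    (integrable_comp_of_finite_range P hX_meas hX_fin fun x => f x • x) hf
  rw [setOf_measure_preimage_pos_eq_filter P hX_fin,
    ← exists_weight_centerMass_eq_iff_mem_convexHull fun _ _ => measureReal_nonneg]
  refine exists_congr fun w => and_congr_right fun _ => ?_
  rw [← hintegral, ← hmean]
  refine and_congr_right fun hw => ?_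
  simp only [hratio a ha_pos.ne', hratio w hw.ne']
  exact forall_affine_eq_iff.trans eq_comm
end

section
/- TWFE decomposition into group-time average treatment effects under parallel trends (Proposition 8, following de Chaisemartin and D'Haultfœuille 2020): Under the staggered adoption panel setting and the parallel trends assumption, Σ_{t=1}^T E[D̈_t·Y_t] = Σ_{t=1}^T Σ_{g=2}^{min(t,T)} a(g,t)·τ(g,t)·P(G = g) and Σ_{t=1}^T E[D̈_t²] = Σ_{t=1}^T Σ_{g=2}^{min(t,T)} a(g,t)·P(G = g), where a(g,t) := 1 − (T − g + 1)/T − F(t) + (1/T)·Σ_{s=1}^T F(s) and τ(g,t) := E[Y_t(1) − Y_t(0) | G = g]. Consequently the two-way fixed effects estimand β_TWFE := (Σ_t E[D̈_t·Y_t])/(Σ_t E[D̈_t²]) is the a(g,t)-weighted average of the group-time average treatment effects τ(g,t) over treated cells g ≤ t. -/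
/-!
Apart from the outcomes, every quantity depends on `ω` only through the adoption date `G ω`,
so each expectation is a finite sum over cohorts `g`. As an array `d̈(g, t)`, the two-way
demeaned treatment sums to zero over `t` for every `g`, and to zero over `g` with weights
`P(G = g)` for every `t`; hence it is orthogonal to every array `α g + P(G = g) * β t`.
Parallel trends says that the cohort totals `E[Y_t(0); G = g]` are of this form, so only the
treatment effects survive in `Σ_t E[D̈_t Y_t]`, and writing `D̈ = D - u(g) - v(t)` the same
orthogonality gives `Σ_t E[D̈_t²] = Σ_t E[D̈_t D_t]`. On treated cells `d̈(g, t) = a(g, t)`.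
-/

open MeasureTheory Finset

section TwoWayOrthogonality

variable {ι κ : Type*} (I : Finset ι) (S : Finset κ) {w : ι → κ → ℝ} {π : ι → ℝ}

theorem sum_sum_mul_eq_zero_of_eq_add (hrow : ∀ g ∈ I, ∑ t ∈ S, w g t = 0)
    (hcol : ∀ t ∈ S, ∑ g ∈ I, w g t * π g = 0) {v : ι → κ → ℝ} (α : ι → ℝ) (β : κ → ℝ)
    (hv : ∀ g ∈ I, ∀ t ∈ S, v g t = α g + π g * β t) :
    ∑ t ∈ S, ∑ g ∈ I, w g t * v g t = 0 := by
  have hsplit : ∀ t ∈ S, ∑ g ∈ I, w g t * v g t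
      = ∑ g ∈ I, α g * w g t + β t * ∑ g ∈ I, w g t * π g := by
    intro t ht
    rw [mul_sum, ← sum_add_distrib]
    exact sum_congr rfl fun g hg => by rw [hv g hg t ht]; ring
  have hα : ∑ t ∈ S, ∑ g ∈ I, α g * w g t = 0 := by
    rw [sum_comm]
    exact sum_eq_zero fun g hg => by rw [← mul_sum, hrow g hg, mul_zero]
  have hβ : ∑ t ∈ S, β t * ∑ g ∈ I, w g t * π g = 0 :=
    sum_eq_zero fun t ht => by rw [hcol t ht, mul_zero]
  rw [sum_congr rfl hsplit, sum_add_distrib, hα, hβ, add_zero]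

theorem sum_sum_sq_mul_eq_of_eq_sub (hrow : ∀ g ∈ I, ∑ t ∈ S, w g t = 0)
    (hcol : ∀ t ∈ S, ∑ g ∈ I, w g t * π g = 0) {x : ι → κ → ℝ} (a : ι → ℝ) (b : κ → ℝ)
    (hw : ∀ g ∈ I, ∀ t ∈ S, w g t = x g t - a g - b t) :
    ∑ t ∈ S, ∑ g ∈ I, w g t ^ 2 * π g = ∑ t ∈ S, ∑ g ∈ I, w g t * x g t * π g := by
  have hzero := sum_sum_mul_eq_zero_of_eq_add I S hrow hcol
    (v := fun g t => -((a g + b t) * π g)) (fun g => -(a g * π g)) (fun t => -b t)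
    (fun _ _ _ _ => by ring)
  rw [← sub_eq_zero, ← sum_sub_distrib, ← hzero]
  refine sum_congr rfl fun t ht => ?_
  rw [← sum_sub_distrib]
  exact sum_congr rfl fun g hg => by rw [sq, hw g hg t ht]; ring

end TwoWayOrthogonality

noncomputable def twoWayDemean (T : ℕ) (x F : ℕ → ℝ) (t : ℕ) : ℝ :=
  x t - (1 / (T : ℝ)) * ∑ s ∈ Icc 1 T, x s - F t + (1 / (T : ℝ)) * ∑ s ∈ Icc 1 T, F s

theorem sum_twoWayDemean (T : ℕ) (x F : ℕ → ℝ) :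
    ∑ t ∈ Icc 1 T, twoWayDemean T x F t = 0 := by
  rcases Nat.eq_zero_or_pos T with rfl | hT
  · simp
  have hcard : ((Icc 1 T).card : ℝ) = T := by simp
  simp only [twoWayDemean, sum_add_distrib, sum_sub_distrib, sum_const, nsmul_eq_mul, hcard]
  field_simp
  ring

theorem sum_twoWayDemean_mul_eq_zero {ι : Type*} (I : Finset ι) (x : ι → ℕ → ℝ) {π : ι → ℝ}
    (hπ : ∑ g ∈ I, π g = 1) {F : ℕ → ℝ} (hF : ∀ s, F s = ∑ g ∈ I, x g s * π g) (T t : ℕ) :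
    ∑ g ∈ I, twoWayDemean T (x g) F t * π g = 0 := by
  have hswap : ∑ g ∈ I, (∑ s ∈ Icc 1 T, x g s) * π g = ∑ s ∈ Icc 1 T, F s := by
    simp only [sum_mul, hF]
    exact sum_comm
  simp only [twoWayDemean, sub_mul, add_mul, sum_add_distrib, sum_sub_distrib, mul_assoc,
    ← mul_sum, hπ, hswap, ← hF]
  ring

noncomputable def adopted (g : ℕ∞) (t : ℕ) : ℝ := if g ≤ t then 1 else 0

def adoptionDates (T : ℕ) : Finset ℕ∞ := insert ⊤ ((Icc 2 T).image (↑))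

theorem mem_adoptionDates {T : ℕ} {g : ℕ∞} :
    g ∈ adoptionDates T ↔ g = ⊤ ∨ (2 ≤ g ∧ g ≤ T) := by
  unfold adoptionDates
  rw [mem_insert, mem_image]
  refine or_congr_right ⟨?_, fun ⟨h2, hT⟩ => ?_⟩
  · rintro ⟨k, hk, rfl⟩
    rw [mem_Icc] at hk
    exact ⟨by exact_mod_cast hk.1, by exact_mod_cast hk.2⟩
  · lift g to ℕ using ne_top_of_le_ne_top (ENat.natCast_ne_top T) hT
    exact ⟨g, mem_Icc.2 ⟨by exact_mod_cast h2, by exact_mod_cast hT⟩, rfl⟩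

theorem sum_adoptionDates_adopted_mul (T t : ℕ) (f : ℕ∞ → ℝ) :
    ∑ g ∈ adoptionDates T, adopted g t * f g = ∑ k ∈ Icc 2 (min t T), f k := by
  have htop : (⊤ : ℕ∞) ∉ (Icc 2 T).image (↑) := by simp
  rw [adoptionDates, sum_insert htop, sum_image fun _ _ _ _ h => by exact_mod_cast h]
  have hfilter : (Icc 2 T).filter (fun k => k ≤ t) = Icc 2 (min t T) := by
    ext k; simp only [mem_filter, mem_Icc]; omega
  simp [adopted, ← hfilter, sum_filter]

theorem twoWayDemean_adopted_coe {T k t : ℕ} (hk : k ∈ Icc 2 (min t T)) (F : ℕ → ℝ) :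
    twoWayDemean T (adopted k) F t
      = 1 - ((T : ℝ) - k + 1) / T - F t + (1 / (T : ℝ)) * ∑ s ∈ Icc 1 T, F s := by
  rw [mem_Icc, le_min_iff] at hk
  have hcount : ∑ s ∈ Icc 1 T, adopted k s = (T : ℝ) - k + 1 := by
    have hfilter : (Icc 1 T).filter (fun s => k ≤ s) = Icc k T := by
      ext s; simp only [mem_filter, mem_Icc]; omega
    simp only [adopted, Nat.cast_le, sum_boole, hfilter, Nat.card_Icc]
    rw [Nat.cast_sub (by omega)]
    push_cast; ring
  rw [twoWayDemean, hcount, adopted, if_pos (by exact_mod_cast hk.2.1)]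
  ring

theorem eq_add_mul_sum_of_sub_eq {f δ : ℕ → ℝ} {c : ℝ} {T : ℕ}
    (h : ∀ t ∈ Icc 2 T, f t - f (t - 1) = c * δ t) :
    ∀ t ∈ Icc 1 T, f t = f 1 + c * ∑ u ∈ Icc 2 t, δ u := by
  intro t ht
  rw [mem_Icc] at ht
  induction t, ht.1 using Nat.le_induction with
  | base => simp
  | succ n hn ih =>
    have hstep := h (n + 1) (mem_Icc.2 ⟨by omega, ht.2⟩)
    rw [Nat.add_sub_cancel] at hstep
    rw [sum_Icc_succ_top (by omega), mul_add, ← add_assoc, ← ih ⟨hn, by omega⟩]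
    linarith

theorem comp_mul_eq_sum_indicator {Ω β : Type*} {G : Ω → β} {I : Finset β}
    (hGI : ∀ ω, G ω ∈ I) (φ : β → ℝ) (X : Ω → ℝ) :
    (fun ω => φ (G ω) * X ω)
      = fun ω => ∑ g ∈ I, {ω | G ω = g}.indicator (fun ω => φ g * X ω) ω := by
  funext ω
  rw [sum_eq_single_of_mem (G ω) (hGI ω)]
  · rw [Set.indicator_of_mem (show ω ∈ {ω' | G ω' = G ω} from rfl)]
  · exact fun g _ hg => Set.indicator_of_notMem (fun h => hg h.symm) _

section Fibers

variable {Ω β : Type*} {mΩ : MeasurableSpace Ω} {P : Measure Ω} [MeasurableSpace β]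
  [MeasurableSingletonClass β] {G : Ω → β} {I : Finset β}

theorem measurableSet_fiber (hG : Measurable G) (g : β) : MeasurableSet {ω | G ω = g} :=
  hG (measurableSet_singleton g)

theorem integrable_comp_mul (hG : Measurable G) (hGI : ∀ ω, G ω ∈ I) (φ : β → ℝ) {X : Ω → ℝ}
    (hX : Integrable X P) : Integrable (fun ω => φ (G ω) * X ω) P := by
  rw [comp_mul_eq_sum_indicator hGI]
  exact integrable_finsetSum I fun g _ =>
    (hX.const_mul (φ g)).indicator (measurableSet_fiber hG g)

theorem integral_comp_mul_eq_sum (hG : Measurable G) (hGI : ∀ ω, G ω ∈ I) (φ : β → ℝ)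
    {X : Ω → ℝ} (hX : Integrable X P) :
    ∫ ω, φ (G ω) * X ω ∂P = ∑ g ∈ I, φ g * ∫ ω in {ω | G ω = g}, X ω ∂P := by
  rw [comp_mul_eq_sum_indicator hGI, integral_finsetSum I fun g _ =>
    (hX.const_mul (φ g)).indicator (measurableSet_fiber hG g)]
  exact sum_congr rfl fun g _ => by
    rw [integral_indicator (measurableSet_fiber hG g), integral_const_mul]

theorem integral_comp_eq_sum_s10 [IsFiniteMeasure P] (hG : Measurable G) (hGI : ∀ ω, G ω ∈ I)
    (φ : β → ℝ) : ∫ ω, φ (G ω) ∂P = ∑ g ∈ I, φ g * P.real {ω | G ω = g} := by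
  simpa [mul_comm] using integral_comp_mul_eq_sum (P := P) hG hGI φ (integrable_const 1)

theorem sum_measureReal_fiber [IsProbabilityMeasure P] (hG : Measurable G)
    (hGI : ∀ ω, G ω ∈ I) : ∑ g ∈ I, P.real {ω | G ω = g} = 1 := by
  simpa using (integral_comp_eq_sum_s10 (P := P) hG hGI fun _ => (1 : ℝ)).symm

end Fibers

theorem setIntegral_div_toReal_eq_setAverage {Ω : Type*} {mΩ : MeasurableSpace Ω}
    (P : Measure Ω) (s : Set Ω) (f : Ω → ℝ) :
    (∫ ω in s, f ω ∂P) / (P s).toReal = ⨍ ω in s, f ω ∂P := by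
  rw [setAverage_eq, smul_eq_mul, div_eq_inv_mul]
  rfl

section TwoWayFixedEffects

variable {Ω : Type*} {mΩ : MeasurableSpace Ω} {P : Measure Ω} [IsProbabilityMeasure P]
  {T : ℕ} {G : Ω → ℕ∞} {F : ℕ → ℝ}

theorem measureReal_le_eq_sum (hG : Measurable G) (hGI : ∀ ω, G ω ∈ adoptionDates T)
    (t : ℕ) :
    P.real {ω | G ω ≤ t} = ∑ g ∈ adoptionDates T, adopted g t * P.real {ω | G ω = g} := by
  have hind : (fun ω => adopted (G ω) t) = {ω | G ω ≤ t}.indicator 1 :=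
    funext fun ω => by simp [adopted, Set.indicator_apply]
  rw [← integral_comp_eq_sum_s10 hG hGI, hind]
  exact (integral_indicator_one
    (hG (MeasurableSet.of_discrete (s := Set.Iic (t : ℕ∞))))).symm

theorem sum_twoWayDemean_adopted_mul_measureReal (hG : Measurable G)
    (hGI : ∀ ω, G ω ∈ adoptionDates T) (hF : ∀ t, F t = P.real {ω | G ω ≤ t}) (t : ℕ) :
    ∑ g ∈ adoptionDates T, twoWayDemean T (adopted g) F t * P.real {ω | G ω = g} = 0 :=
  sum_twoWayDemean_mul_eq_zero _ adopted (sum_measureReal_fiber hG hGI)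
    (fun s => (hF s).trans (measureReal_le_eq_sum hG hGI s)) T t

theorem sum_integral_twoWayDemean_sq (hG : Measurable G) (hGI : ∀ ω, G ω ∈ adoptionDates T)
    (hF : ∀ t, F t = P.real {ω | G ω ≤ t}) :
    ∑ t ∈ Icc 1 T, ∫ ω, twoWayDemean T (adopted (G ω)) F t ^ 2 ∂P
      = ∑ t ∈ Icc 1 T, ∑ k ∈ Icc 2 (min t T),
          twoWayDemean T (adopted k) F t * P.real {ω | G ω = k} := by
  calc _ = ∑ t ∈ Icc 1 T, ∑ g ∈ adoptionDates T,
          twoWayDemean T (adopted g) F t ^ 2 * P.real {ω | G ω = g} :=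
        sum_congr rfl fun t _ =>
          integral_comp_eq_sum_s10 hG hGI fun g => twoWayDemean T (adopted g) F t ^ 2
    _ = ∑ t ∈ Icc 1 T, ∑ g ∈ adoptionDates T,
          twoWayDemean T (adopted g) F t * adopted g t * P.real {ω | G ω = g} :=
        sum_sum_sq_mul_eq_of_eq_sub _ _ (fun g _ => sum_twoWayDemean T (adopted g) F)
          (fun t _ => sum_twoWayDemean_adopted_mul_measureReal hG hGI hF t)
          (fun g => 1 / (T : ℝ) * ∑ s ∈ Icc 1 T, adopted g s)
          (fun t => F t - 1 / (T : ℝ) * ∑ s ∈ Icc 1 T, F s)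
          (fun _ _ _ _ => by rw [twoWayDemean]; ring)
    _ = _ := sum_congr rfl fun t _ => by
        rw [← sum_adoptionDates_adopted_mul T t
          fun g => twoWayDemean T (adopted g) F t * P.real {ω | G ω = g}]
        exact sum_congr rfl fun g _ => by ring

theorem sum_integral_twoWayDemean_mul (hG : Measurable G) (hGI : ∀ ω, G ω ∈ adoptionDates T)
    (hF : ∀ t, F t = P.real {ω | G ω ≤ t}) {Y0 Y1 : ℕ → Ω → ℝ}
    (hY0 : ∀ t ∈ Icc 1 T, Integrable (Y0 t) P) (hY1 : ∀ t ∈ Icc 1 T, Integrable (Y1 t) P)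
    {δ : ℕ → ℝ} (hPT : ∀ g ∈ adoptionDates T, ∀ t ∈ Icc 2 T,
      ⨍ ω in {ω | G ω = g}, (Y0 t ω - Y0 (t - 1) ω) ∂P = δ t) :
    ∑ t ∈ Icc 1 T, ∫ ω, twoWayDemean T (adopted (G ω)) F t *
        (Y0 t ω + adopted (G ω) t * (Y1 t ω - Y0 t ω)) ∂P
      = ∑ t ∈ Icc 1 T, ∑ k ∈ Icc 2 (min t T),
          twoWayDemean T (adopted k) F t * ∫ ω in {ω | G ω = k}, (Y1 t ω - Y0 t ω) ∂P := by
  set m : ℕ∞ → ℕ → ℝ := fun g t => ∫ ω in {ω | G ω = g}, Y0 t ω ∂P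
  have hsplit : ∀ t ∈ Icc 1 T, ∫ ω, twoWayDemean T (adopted (G ω)) F t *
        (Y0 t ω + adopted (G ω) t * (Y1 t ω - Y0 t ω)) ∂P
      = ∑ g ∈ adoptionDates T, twoWayDemean T (adopted g) F t * m g t
        + ∑ k ∈ Icc 2 (min t T),
          twoWayDemean T (adopted k) F t * ∫ ω in {ω | G ω = k}, (Y1 t ω - Y0 t ω) ∂P := by
    intro t ht
    have hATT : Integrable (fun ω => Y1 t ω - Y0 t ω) P := (hY1 t ht).sub (hY0 t ht)
    set w : ℕ∞ → ℝ := fun g => twoWayDemean T (adopted g) F t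
    simp_rw [mul_add, ← mul_assoc]
    rw [integral_add (integrable_comp_mul hG hGI w (hY0 t ht))
        (integrable_comp_mul hG hGI (fun g => w g * adopted g t) hATT),
      integral_comp_mul_eq_sum hG hGI w (hY0 t ht),
      integral_comp_mul_eq_sum hG hGI (fun g => w g * adopted g t) hATT,
      ← sum_adoptionDates_adopted_mul T t
        fun g => w g * ∫ ω in {ω | G ω = g}, (Y1 t ω - Y0 t ω) ∂P]
    exact congrArg _ (sum_congr rfl fun g _ => by ring)
  have hlevel : ∀ g ∈ adoptionDates T, ∀ t ∈ Icc 1 T,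
      m g t = m g 1 + P.real {ω | G ω = g} * ∑ u ∈ Icc 2 t, δ u := by
    intro g hg
    refine eq_add_mul_sum_of_sub_eq fun t ht => ?_
    obtain ⟨h2t, htT⟩ := mem_Icc.1 ht
    rw [← hPT g hg t ht, ← smul_eq_mul, measure_smul_setAverage _ (measure_ne_top _ _),
      integral_sub (hY0 t (mem_Icc.2 ⟨by omega, htT⟩)).integrableOn
        (hY0 (t - 1) (mem_Icc.2 ⟨by omega, by omega⟩)).integrableOn]
  have hzero :
      ∑ t ∈ Icc 1 T, ∑ g ∈ adoptionDates T, twoWayDemean T (adopted g) F t * m g t = 0 :=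
    sum_sum_mul_eq_zero_of_eq_add _ _ (fun g _ => sum_twoWayDemean T (adopted g) F)
      (fun t _ => sum_twoWayDemean_adopted_mul_measureReal hG hGI hF t) _ _ hlevel
  rw [sum_congr rfl hsplit, sum_add_distrib, hzero, zero_add]

end TwoWayFixedEffects

theorem twfe_decomposition_group_time_general
    {Ω : Type*} {mΩ : MeasurableSpace Ω} (P : Measure Ω) [IsProbabilityMeasure P]
    (T : ℕ)
    (G : Ω → ℕ∞) (hG_meas : Measurable G)
    (hG_range : ∀ ω, G ω = ⊤ ∨ (2 ≤ G ω ∧ G ω ≤ (T : ℕ∞)))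
    (Y0 Y1 : ℕ → Ω → ℝ)
    (hY0_int : ∀ t ∈ Finset.Icc 1 T, Integrable (Y0 t) P)
    (hY1_int : ∀ t ∈ Finset.Icc 1 T, Integrable (Y1 t) P)
    (D : ℕ → Ω → ℝ) (hD : ∀ t ω, D t ω = if G ω ≤ (t : ℕ∞) then 1 else 0)
    (Yobs : ℕ → Ω → ℝ) (hYobs : ∀ t ω, Yobs t ω = D t ω * Y1 t ω + (1 - D t ω) * Y0 t ω)
    (F : ℕ → ℝ) (hF : ∀ t, F t = (P {ω | G ω ≤ (t : ℕ∞)}).toReal)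
    (Ddd : ℕ → Ω → ℝ)
    (hDdd : ∀ t ω, Ddd t ω = D t ω - (1 / (T : ℝ)) * ∑ s ∈ Finset.Icc 1 T, D s ω
      - F t + (1 / (T : ℝ)) * ∑ s ∈ Finset.Icc 1 T, F s)
    -- parallel trends
    (hPT : ∀ t : ℕ, 2 ≤ t → t ≤ T →
      ∀ g g' : ℕ∞, (g = ⊤ ∨ (2 ≤ g ∧ g ≤ (T : ℕ∞))) → (g' = ⊤ ∨ (2 ≤ g' ∧ g' ≤ (T : ℕ∞))) →
        (∫ ω in {ω | G ω = g}, (Y0 t ω - Y0 (t - 1) ω) ∂P) / (P {ω | G ω = g}).toReal =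
        (∫ ω in {ω | G ω = g'}, (Y0 t ω - Y0 (t - 1) ω) ∂P) / (P {ω | G ω = g'}).toReal)
    -- TWFE weights and group-time average treatment effects
    (aw : ℕ → ℕ → ℝ)
    (haw : ∀ g t, aw g t = 1 - ((T : ℝ) - (g : ℝ) + 1) / (T : ℝ) - F t
      + (1 / (T : ℝ)) * ∑ s ∈ Finset.Icc 1 T, F s)
    (τ : ℕ → ℕ → ℝ)
    (hτ : ∀ g t, τ g t = (∫ ω in {ω | G ω = (g : ℕ∞)}, (Y1 t ω - Y0 t ω) ∂P) /
      (P {ω | G ω = (g : ℕ∞)}).toReal) :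
    (∑ t ∈ Finset.Icc 1 T, ∫ ω, Ddd t ω * Yobs t ω ∂P) =
      (∑ t ∈ Finset.Icc 1 T, ∑ g ∈ Finset.Icc 2 (min t T),
        aw g t * τ g t * (P {ω | G ω = (g : ℕ∞)}).toReal) ∧
    (∑ t ∈ Finset.Icc 1 T, ∫ ω, (Ddd t ω) ^ 2 ∂P) =
      (∑ t ∈ Finset.Icc 1 T, ∑ g ∈ Finset.Icc 2 (min t T),
        aw g t * (P {ω | G ω = (g : ℕ∞)}).toReal) ∧
    (∑ t ∈ Finset.Icc 1 T, ∫ ω, Ddd t ω * Yobs t ω ∂P) /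
        (∑ t ∈ Finset.Icc 1 T, ∫ ω, (Ddd t ω) ^ 2 ∂P) =
      (∑ t ∈ Finset.Icc 1 T, ∑ g ∈ Finset.Icc 2 (min t T),
        aw g t * τ g t * (P {ω | G ω = (g : ℕ∞)}).toReal) /
      (∑ t ∈ Finset.Icc 1 T, ∑ g ∈ Finset.Icc 2 (min t T),
        aw g t * (P {ω | G ω = (g : ℕ∞)}).toReal) := by
  have hGI : ∀ ω, G ω ∈ adoptionDates T := fun ω => mem_adoptionDates.2 (hG_range ω)
  have hDdd' : Ddd = fun t ω => twoWayDemean T (adopted (G ω)) F t :=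
    funext fun t => funext fun ω => by simp only [hDdd, hD, twoWayDemean, adopted]
  have hYobs' : Yobs = fun t ω => Y0 t ω + adopted (G ω) t * (Y1 t ω - Y0 t ω) :=
    funext fun t => funext fun ω => by rw [hYobs, hD, adopted]; ring
  have hPT' : ∀ g ∈ adoptionDates T, ∀ t ∈ Icc 2 T, ⨍ ω in {ω | G ω = g},
      (Y0 t ω - Y0 (t - 1) ω) ∂P = ⨍ ω in {ω | G ω = ⊤}, (Y0 t ω - Y0 (t - 1) ω) ∂P := by
    intro g hg t ht
    rw [mem_Icc] at ht
    simpa only [setIntegral_div_toReal_eq_setAverage] using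
      hPT t ht.1 ht.2 g ⊤ (mem_adoptionDates.1 hg) (Or.inl rfl)
  have hweight : ∀ t, ∀ k ∈ Icc 2 (min t T), twoWayDemean T (adopted k) F t = aw k t :=
    fun t k hk => by rw [twoWayDemean_adopted_coe hk, haw]
  have hatt : ∀ (k : ℕ) t, ∫ ω in {ω | G ω = k}, (Y1 t ω - Y0 t ω) ∂P
      = τ k t * (P {ω | G ω = k}).toReal := fun k t => by
    rw [hτ, setIntegral_div_toReal_eq_setAverage, mul_comm, ← smul_eq_mul]
    exact (measure_smul_setAverage _ (measure_ne_top _ _)).symm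
  have hcov := sum_integral_twoWayDemean_mul hG_meas hGI hF hY0_int hY1_int hPT'
  have hvar := sum_integral_twoWayDemean_sq hG_meas hGI hF
  subst hDdd' hYobs'
  have hcov' : _ = _ := hcov.trans <| sum_congr rfl fun t _ =>
    sum_congr rfl fun k hk => by rw [hweight t k hk, hatt, ← mul_assoc]
  have hvar' : _ = _ := hvar.trans <| sum_congr rfl fun t _ =>
    sum_congr rfl fun k hk => by rw [hweight t k hk]
  exact ⟨hcov', hvar', by rw [hcov', hvar']; rfl⟩

/-- **Proposition 8** (TWFE decomposition into group-time average treatment effects under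
parallel trends, following de Chaisemartin and D'Haultfœuille 2020). In the staggered
adoption panel under parallel trends, `Σ_t E[D̈_t·Y_t]` and `Σ_t E[D̈_t²]` decompose into
sums of `a(g,t)·τ(g,t)·P(G = g)` and `a(g,t)·P(G = g)` over treated cells `g ≤ t`, so the
TWFE estimand is the `a(g,t)`-weighted average of the group-time ATTs `τ(g,t)`. -/
theorem twfe_decomposition_group_time
    {Ω : Type*} {mΩ : MeasurableSpace Ω} (P : Measure Ω) [IsProbabilityMeasure P]
    (T : ℕ) (hT : 2 ≤ T)
    (G : Ω → ℕ∞) (hG_meas : Measurable G)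
    (hG_range : ∀ ω, G ω = ⊤ ∨ (2 ≤ G ω ∧ G ω ≤ (T : ℕ∞)))
    (hG_top : 0 < P {ω | G ω = ⊤})
    (hG_pos : ∀ g : ℕ, 2 ≤ g → g ≤ T → 0 < P {ω | G ω = (g : ℕ∞)})
    (Y0 Y1 : ℕ → Ω → ℝ)
    (hY0_int : ∀ t ∈ Finset.Icc 1 T, Integrable (Y0 t) P)
    (hY1_int : ∀ t ∈ Finset.Icc 1 T, Integrable (Y1 t) P)
    (hY0_meas : ∀ t ∈ Finset.Icc 1 T, Measurable (Y0 t))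
    (hY1_meas : ∀ t ∈ Finset.Icc 1 T, Measurable (Y1 t))
    (D : ℕ → Ω → ℝ) (hD : ∀ t ω, D t ω = if G ω ≤ (t : ℕ∞) then 1 else 0)
    (Yobs : ℕ → Ω → ℝ) (hYobs : ∀ t ω, Yobs t ω = D t ω * Y1 t ω + (1 - D t ω) * Y0 t ω)
    (F : ℕ → ℝ) (hF : ∀ t, F t = (P {ω | G ω ≤ (t : ℕ∞)}).toReal)
    (Ddd : ℕ → Ω → ℝ)
    (hDdd : ∀ t ω, Ddd t ω = D t ω - (1 / (T : ℝ)) * ∑ s ∈ Finset.Icc 1 T, D s ω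
      - F t + (1 / (T : ℝ)) * ∑ s ∈ Finset.Icc 1 T, F s)
    -- parallel trends
    (hPT : ∀ t : ℕ, 2 ≤ t → t ≤ T →
      ∀ g g' : ℕ∞, (g = ⊤ ∨ (2 ≤ g ∧ g ≤ (T : ℕ∞))) → (g' = ⊤ ∨ (2 ≤ g' ∧ g' ≤ (T : ℕ∞))) →
        (∫ ω in {ω | G ω = g}, (Y0 t ω - Y0 (t - 1) ω) ∂P) / (P {ω | G ω = g}).toReal =
        (∫ ω in {ω | G ω = g'}, (Y0 t ω - Y0 (t - 1) ω) ∂P) / (P {ω | G ω = g'}).toReal)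
    -- TWFE weights and group-time average treatment effects
    (aw : ℕ → ℕ → ℝ)
    (haw : ∀ g t, aw g t = 1 - ((T : ℝ) - (g : ℝ) + 1) / (T : ℝ) - F t
      + (1 / (T : ℝ)) * ∑ s ∈ Finset.Icc 1 T, F s)
    (τ : ℕ → ℕ → ℝ)
    (hτ : ∀ g t, τ g t = (∫ ω in {ω | G ω = (g : ℕ∞)}, (Y1 t ω - Y0 t ω) ∂P) /
      (P {ω | G ω = (g : ℕ∞)}).toReal) :
    (∑ t ∈ Finset.Icc 1 T, ∫ ω, Ddd t ω * Yobs t ω ∂P) =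
      (∑ t ∈ Finset.Icc 1 T, ∑ g ∈ Finset.Icc 2 (min t T),
        aw g t * τ g t * (P {ω | G ω = (g : ℕ∞)}).toReal) ∧
    (∑ t ∈ Finset.Icc 1 T, ∫ ω, (Ddd t ω) ^ 2 ∂P) =
      (∑ t ∈ Finset.Icc 1 T, ∑ g ∈ Finset.Icc 2 (min t T),
        aw g t * (P {ω | G ω = (g : ℕ∞)}).toReal) ∧
    (∑ t ∈ Finset.Icc 1 T, ∫ ω, Ddd t ω * Yobs t ω ∂P) /
        (∑ t ∈ Finset.Icc 1 T, ∫ ω, (Ddd t ω) ^ 2 ∂P) =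
      (∑ t ∈ Finset.Icc 1 T, ∑ g ∈ Finset.Icc 2 (min t T),
        aw g t * τ g t * (P {ω | G ω = (g : ℕ∞)}).toReal) /
      (∑ t ∈ Finset.Icc 1 T, ∑ g ∈ Finset.Icc 2 (min t T),
        aw g t * (P {ω | G ω = (g : ℕ∞)}).toReal) :=
  twfe_decomposition_group_time_general (mΩ := mΩ) P T G hG_meas hG_range Y0 Y1 hY0_int hY1_int D hD
    Yobs hYobs F hF Ddd hDdd hPT aw haw τ hτ
end

section
/- Hadamard directional differentiability of the coordinatewise maximum (Lemma F.1): Fix K ≥ 1 and θ ∈ ℝ^K, and define φ : ℝ^K → ℝ by φ(v) := max_{1 ≤ j ≤ K} v(j). Then for every sequence (h_n) in ℝ^K with h_n → h ∈ ℝ^K and every sequence of positive reals t_n → 0, one has (φ(θ + t_n·h_n) − φ(θ))/t_n → max_{j ∈ A(θ)} h(j), where A(θ) := {j ∈ {1,…,K} : θ(j) = max_{k} θ(k)} is the argmax set of θ. -/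
open Filter Topology

/-!
Write `M = max θ` and `A` for the argmax set. A perturbation `u` of `θ` that is small compared
with the gaps `M - θ j`, `j ∉ A`, cannot move the maximum off `A`, so
`max (θ + u) = M + max_{a ∈ A} u a`. Since `t_n h_n → 0`, this holds eventually for `u = t_n h_n`,
where the difference quotient becomes `max_{a ∈ A} h_n a`, which tends to `max_{a ∈ A} h a` by
continuity of a finite maximum.
-/

section

variable {ι α : Type*}

lemma tendsto_ciSup_of_tendsto {L : Type*} [ConditionallyCompleteLattice L] [TopologicalSpace L]
    [ContinuousSup L] [Finite ι] [Nonempty ι] {l : Filter α} {f : α → ι → L} {g : ι → L}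
    (hf : ∀ i, Tendsto (fun a => f a i) l (𝓝 (g i))) :
    Tendsto (fun a => ⨆ i, f a i) l (𝓝 (⨆ i, g i)) := by
  have := Fintype.ofFinite ι
  simp only [← Finset.sup'_univ_eq_ciSup]
  exact Tendsto.finset_sup'_nhds_apply Finset.univ_nonempty fun i _ => hf i

lemma nonempty_argmax {L : Type*} [ConditionallyCompleteLinearOrder L] [Finite ι] [Nonempty ι]
    (θ : ι → L) : Nonempty {j // θ j = ⨆ k, θ k} :=
  let ⟨j, hj⟩ := exists_eq_ciSup_of_finite (f := θ)
  ⟨⟨j, hj⟩⟩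

lemma ciSup_add_eq_add_ciSup_argmax [Finite ι] [Nonempty ι] (θ u : ι → ℝ)
    (hu : ∀ i j, θ j < ⨆ k, θ k → 2 * |u i| < (⨆ k, θ k) - θ j) :
    ⨆ j, (θ j + u j) = (⨆ k, θ k) + ⨆ a : {j // θ j = ⨆ k, θ k}, u a := by
  set M := ⨆ k, θ k
  have := nonempty_argmax θ
  have hθ_le (j : ι) : θ j ≤ M := le_ciSup (Set.finite_range θ).bddAbove j
  have hu_le (a : {j // θ j = M}) : u a ≤ ⨆ b : {j // θ j = M}, u b :=
    le_ciSup (f := fun b : {j // θ j = M} => u b) (Set.finite_range _).bddAbove a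
  apply le_antisymm
  · refine ciSup_le fun j => ?_
    rcases (hθ_le j).lt_or_eq with hj | hj
    · let a : {j // θ j = M} := Classical.arbitrary _
      have huj := hu j j hj
      have hua := hu a j hj
      linarith [le_abs_self (u j), neg_abs_le (u a), hu_le a]
    · linarith [hu_le ⟨j, hj⟩]
  · rw [← le_sub_iff_add_le']
    refine ciSup_le fun a => le_sub_iff_add_le'.2 ?_
    calc M + u a = θ a + u a := by rw [a.2]
      _ ≤ ⨆ j, (θ j + u j) := le_ciSup (Set.finite_range fun j => θ j + u j).bddAbove (a : ι)

lemma eventually_ciSup_add_eq_add_ciSup_argmax [Finite ι] [Nonempty ι] (θ : ι → ℝ)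
    {l : Filter α} {u : α → ι → ℝ} (hu : ∀ i, Tendsto (fun a => u a i) l (𝓝 0)) :
    ∀ᶠ a in l, ⨆ j, (θ j + u a j) = (⨆ k, θ k) + ⨆ i : {j // θ j = ⨆ k, θ k}, u a i := by
  have hsmall (i j : ι) : ∀ᶠ a in l, θ j < ⨆ k, θ k → 2 * |u a i| < (⨆ k, θ k) - θ j := by
    by_cases hj : θ j < ⨆ k, θ k
    · have h2u : Tendsto (fun a => 2 * |u a i|) l (𝓝 0) := by
        simpa using ((hu i).abs).const_mul 2
      exact (h2u.eventually (gt_mem_nhds (sub_pos.2 hj))).mono fun _ h _ => h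
    · exact Eventually.of_forall fun _ h => absurd h hj
  filter_upwards [eventually_all.2 fun i => eventually_all.2 (hsmall i)] with a ha
  exact ciSup_add_eq_add_ciSup_argmax θ (u a) ha

end

/-- **Lemma F.1** (Hadamard directional differentiability of the coordinatewise maximum).
For `φ(v) = max_j v(j)` on `ℝ^K`, any `h_n → h` and positive `t_n → 0` satisfy
`(φ(θ + t_n h_n) − φ(θ))/t_n → max_{j ∈ A(θ)} h(j)`, where `A(θ)` is the argmax set. -/
theorem max_hadamard_directionally_differentiable
    {K : ℕ} (hK : 0 < K) (θ : Fin K → ℝ)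
    (h : Fin K → ℝ) (hn : ℕ → Fin K → ℝ) (t : ℕ → ℝ)
    (hhn : Tendsto hn atTop (𝓝 h))
    (ht_pos : ∀ n, 0 < t n)
    (ht0 : Tendsto t atTop (𝓝 0)) :
    Tendsto
      (fun n => ((⨆ j, (θ j + t n * hn n j)) - ⨆ j, θ j) / t n)
      atTop
      (𝓝 (⨆ j : {j : Fin K // θ j = ⨆ k, θ k}, h j)) := by
  have : Nonempty (Fin K) := ⟨⟨0, hK⟩⟩
  have := nonempty_argmax θ
  have hcoord (j : Fin K) : Tendsto (fun n => hn n j) atTop (𝓝 (h j)) := tendsto_pi_nhds.1 hhn j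
  have hstep (j : Fin K) : Tendsto (fun n => t n * hn n j) atTop (𝓝 0) := by
    simpa using ht0.mul (hcoord j)
  refine (tendsto_ciSup_of_tendsto fun a : {j // θ j = ⨆ k, θ k} => hcoord a).congr' ?_
  filter_upwards [eventually_ciSup_add_eq_add_ciSup_argmax θ hstep] with n hmax
  rw [hmax, ← Real.mul_iSup_of_nonneg (ht_pos n).le]
  field_simp [(ht_pos n).ne']
  ring
end

section
/- Proportionality of weight functions with identical weighted estimands (key step, equation (A.1)): Let a, w : Ω → ℝ be 𝒢-measurable with E[a²] < ∞, E[w²] < ∞, E[a] > 0, and E[w] > 0. If E[a·τ]/E[a] = E[w·τ]/E[w] for every 𝒢-measurable τ : Ω → ℝ with E[τ²] < ∞, then a = (E[a]/E[w])·w P-almost surely. In particular, if w takes values in [0,1], then a ≥ 0 P-almost surely. -/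
open MeasureTheory

/-!
Put `c = E[a]`, `d = E[w]` and test the hypothesis with `τ = a / c - w / d`, which is
`𝒢`-measurable and square-integrable. Since
`E[(a / c)·τ] = E[a·τ] / c = E[w·τ] / d = E[(w / d)·τ]`, we get
`E[τ²] = E[(a / c - w / d)·τ] = 0`, so `τ = 0` a.s., i.e. `a = (c / d)·w` a.s.
-/

section

variable {Ω : Type*} {mΩ : MeasurableSpace Ω} {μ : Measure Ω}

lemma ae_eq_zero_of_integral_mul_self_eq_zero {f : Ω → ℝ} (hf : MemLp f 2 μ)
    (h : ∫ ω, f ω * f ω ∂μ = 0) : f =ᵐ[μ] 0 := by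
  have hsq : ∀ᵐ ω ∂μ, f ω * f ω = 0 :=
    (integral_eq_zero_iff_of_nonneg (fun ω => mul_self_nonneg (f ω)) (hf.integrable_mul hf)).mp h
  filter_upwards [hsq] with ω hω using mul_self_eq_zero.mp hω

lemma ae_eq_of_integral_mul_sub_eq {f g : Ω → ℝ} (hf : MemLp f 2 μ) (hg : MemLp g 2 μ)
    (h : ∫ ω, f ω * (f ω - g ω) ∂μ = ∫ ω, g ω * (f ω - g ω) ∂μ) :
    f =ᵐ[μ] g := by
  have hfg : MemLp (f - g) 2 μ := hf.sub hg
  have hsq : ∫ ω, (f - g) ω * (f - g) ω ∂μ = 0 := by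
    have hfi : Integrable (fun ω => f ω * (f - g) ω) μ := hf.integrable_mul hfg
    have hgi : Integrable (fun ω => g ω * (f - g) ω) μ := hg.integrable_mul hfg
    simp_rw [Pi.sub_apply, sub_mul] at hfi hgi ⊢
    rw [integral_sub hfi hgi, h, sub_self]
  filter_upwards [ae_eq_zero_of_integral_mul_self_eq_zero hfg hsq] with ω hω
  exact sub_eq_zero.mp hω

end

theorem proportionality_of_weight_functions_general
    {Ω : Type*} {mΩ : MeasurableSpace Ω} (P : Measure Ω)
    (𝒢 : MeasurableSpace Ω)
    (a w : Ω → ℝ)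
    (ha_meas : Measurable[𝒢] a) (hw_meas : Measurable[𝒢] w)
    (ha_L2 : MemLp a 2 P) (hw_L2 : MemLp w 2 P)
    (ha_pos : 0 < ∫ ω, a ω ∂P) (hw_pos : 0 < ∫ ω, w ω ∂P)
    (hrep : ∀ τ : Ω → ℝ, Measurable[𝒢] τ → MemLp τ 2 P →
      (∫ ω, a ω * τ ω ∂P) / (∫ ω, a ω ∂P) = (∫ ω, w ω * τ ω ∂P) / (∫ ω, w ω ∂P)) :
    (∀ᵐ ω ∂P, a ω = ((∫ ω', a ω' ∂P) / (∫ ω', w ω' ∂P)) * w ω) ∧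
    ((∀ ω, 0 ≤ w ω ∧ w ω ≤ 1) → ∀ᵐ ω ∂P, 0 ≤ a ω) := by
  set c := ∫ ω, a ω ∂P
  set d := ∫ ω, w ω ∂P
  have ha' : MemLp (fun ω => a ω / c) 2 P := by
    simpa only [div_eq_mul_inv] using ha_L2.mul_const c⁻¹
  have hw' : MemLp (fun ω => w ω / d) 2 P := by
    simpa only [div_eq_mul_inv] using hw_L2.mul_const d⁻¹
  have hτ := hrep (fun ω => a ω / c - w ω / d)
    ((ha_meas.div_const c).sub (hw_meas.div_const d)) (ha'.sub hw')
  rw [← integral_div, ← integral_div] at hτ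
  simp_rw [← div_mul_eq_mul_div] at hτ
  have hprop : ∀ᵐ ω ∂P, a ω = c / d * w ω := by
    filter_upwards [ae_eq_of_integral_mul_sub_eq ha' hw' hτ] with ω hω
    field_simp at hω ⊢
    linarith
  refine ⟨hprop, fun hw01 => ?_⟩
  filter_upwards [hprop] with ω hω
  rw [hω]
  exact mul_nonneg (div_pos ha_pos hw_pos).le (hw01 ω).1

/-- **Key step (equation (A.1))** (Proportionality of weight functions with identical
weighted estimands). If `E[a·τ]/E[a] = E[w·τ]/E[w]` for every `𝒢`-measurable
square-integrable `τ`, then `a = (E[a]/E[w])·w` a.s.; in particular if `w` is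
`[0,1]`-valued then `a ≥ 0` a.s. -/
theorem proportionality_of_weight_functions
    {Ω : Type*} {mΩ : MeasurableSpace Ω} (P : Measure Ω) [IsProbabilityMeasure P]
    (𝒢 : MeasurableSpace Ω) (h𝒢 : 𝒢 ≤ mΩ)
    (a w : Ω → ℝ)
    (ha_meas : Measurable[𝒢] a) (hw_meas : Measurable[𝒢] w)
    (ha_L2 : MemLp a 2 P) (hw_L2 : MemLp w 2 P)
    (ha_pos : 0 < ∫ ω, a ω ∂P) (hw_pos : 0 < ∫ ω, w ω ∂P)
    (hrep : ∀ τ : Ω → ℝ, Measurable[𝒢] τ → MemLp τ 2 P →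
      (∫ ω, a ω * τ ω ∂P) / (∫ ω, a ω ∂P) = (∫ ω, w ω * τ ω ∂P) / (∫ ω, w ω ∂P)) :
    (∀ᵐ ω ∂P, a ω = ((∫ ω', a ω' ∂P) / (∫ ω', w ω' ∂P)) * w ω) ∧
    ((∀ ω, 0 ≤ w ω ∧ w ω ≤ 1) → ∀ᵐ ω ∂P, 0 ≤ a ω) :=
  proportionality_of_weight_functions_general (mΩ := mΩ) P 𝒢 a w ha_meas hw_meas ha_L2 hw_L2 ha_pos
    hw_pos hrep
end

section
/- Validity of the internal-validity bounds regardless of the sign of the weights (Section 4.2): Let a : Ω → ℝ be measurable with E[a²] < ∞, E[a] > 0, and a_max := essSup(a) < ∞ (the sign of a is unrestricted), and let τ : Ω → ℝ be integrable with a·τ integrable and B_ℓ ≤ τ ≤ B_u P-almost surely for constants B_ℓ ≤ B_u. Then, with μ := E[a·τ]/E[a] and ρ := E[a]/a_max ∈ (0, 1], one has μ·ρ + B_ℓ·(1 − ρ) ≤ E[τ] ≤ μ·ρ + B_u·(1 − ρ). -/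
/-!
Since `a ≤ a_max` almost surely, `(a_max - a) (τ - B)` has the sign of `τ - B` whatever the sign
of `a`. Taking expectations and dividing by `a_max ≥ E[a] > 0` gives both bounds.
-/

open MeasureTheory

theorem sub_div_add_mul_one_sub_div {t m e c B : ℝ} (hc : c ≠ 0) :
    t - (m / c + B * (1 - e / c)) = (c * t - m - B * (c - e)) / c := by
  field_simp
  ring

namespace MeasureTheory

variable {Ω : Type*} {mΩ : MeasurableSpace Ω} {P : Measure Ω} [IsProbabilityMeasure P]
  {a τ : Ω → ℝ}

theorem integral_sub_mul_sub_const (ha : Integrable a P) (hτ : Integrable τ P)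
    (haτ : Integrable (fun ω => a ω * τ ω) P) (c B : ℝ) :
    ∫ ω, (c - a ω) * (τ ω - B) ∂P
      = c * ∫ ω, τ ω ∂P - ∫ ω, a ω * τ ω ∂P - B * (c - ∫ ω, a ω ∂P) := by
  have hexpand : (fun ω => (c - a ω) * (τ ω - B))
      = fun ω => c * τ ω - a ω * τ ω - (B * c - B * a ω) := by
    funext ω; ring
  rw [hexpand, integral_sub, integral_sub, integral_sub, integral_const_mul, integral_const_mul,
    integral_const_mul, integral_const]
  · simp only [probReal_univ, one_smul]
    ring
  exacts [integrable_const _, ha.const_mul B, hτ.const_mul c, haτ, (hτ.const_mul c).sub haτ,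
    (integrable_const _).sub (ha.const_mul B)]

theorem div_add_mul_one_sub_div_le_integral (ha : Integrable a P) (hτ : Integrable τ P)
    (haτ : Integrable (fun ω => a ω * τ ω) P) {c B : ℝ} (hc : 0 < c)
    (hac : ∀ᵐ ω ∂P, a ω ≤ c) (hBτ : ∀ᵐ ω ∂P, B ≤ τ ω) :
    (∫ ω, a ω * τ ω ∂P) / c + B * (1 - (∫ ω, a ω ∂P) / c) ≤ ∫ ω, τ ω ∂P := by
  have hnonneg : 0 ≤ ∫ ω, (c - a ω) * (τ ω - B) ∂P := by
    refine integral_nonneg_of_ae ?_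
    filter_upwards [hac, hBτ] with ω h₁ h₂
    exact mul_nonneg (sub_nonneg.2 h₁) (sub_nonneg.2 h₂)
  rw [integral_sub_mul_sub_const ha hτ haτ] at hnonneg
  rw [← sub_nonneg, sub_div_add_mul_one_sub_div hc.ne']
  exact div_nonneg hnonneg hc.le

theorem integral_le_div_add_mul_one_sub_div (ha : Integrable a P) (hτ : Integrable τ P)
    (haτ : Integrable (fun ω => a ω * τ ω) P) {c B : ℝ} (hc : 0 < c)
    (hac : ∀ᵐ ω ∂P, a ω ≤ c) (hτB : ∀ᵐ ω ∂P, τ ω ≤ B) :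
    ∫ ω, τ ω ∂P ≤ (∫ ω, a ω * τ ω ∂P) / c + B * (1 - (∫ ω, a ω ∂P) / c) := by
  have hnonpos : ∫ ω, (c - a ω) * (τ ω - B) ∂P ≤ 0 := by
    refine integral_nonpos_of_ae ?_
    filter_upwards [hac, hτB] with ω h₁ h₂
    exact mul_nonpos_of_nonneg_of_nonpos (sub_nonneg.2 h₁) (sub_nonpos.2 h₂)
  rw [integral_sub_mul_sub_const ha hτ haτ] at hnonpos
  rw [← sub_nonpos, sub_div_add_mul_one_sub_div hc.ne']
  exact div_nonpos_of_nonpos_of_nonneg hnonpos hc.le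

end MeasureTheory

theorem bounds_valid_regardless_of_weight_sign_general
    {Ω : Type*} {mΩ : MeasurableSpace Ω} (P : Measure Ω) [IsProbabilityMeasure P]
    (a τ : Ω → ℝ)
    (ha_L2 : MemLp a 2 P)
    (ha_pos : 0 < ∫ ω, a ω ∂P)
    (ha_bdd : ∃ C : ℝ, ∀ᵐ ω ∂P, a ω ≤ C)
    (hτ_int : Integrable τ P)
    (haτ_int : Integrable (fun ω => a ω * τ ω) P)
    (Bl Bu : ℝ)
    (hτ_bdd : ∀ᵐ ω ∂P, Bl ≤ τ ω ∧ τ ω ≤ Bu)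
    (a_max : ℝ) (ha_max : a_max = essSup a P)
    (μ : ℝ) (hμ : μ = (∫ ω, a ω * τ ω ∂P) / (∫ ω, a ω ∂P))
    (ρ : ℝ) (hρ : ρ = (∫ ω, a ω ∂P) / a_max) :
    (0 < ρ ∧ ρ ≤ 1) ∧
    μ * ρ + Bl * (1 - ρ) ≤ (∫ ω, τ ω ∂P) ∧
    (∫ ω, τ ω ∂P) ≤ μ * ρ + Bu * (1 - ρ) := by
  have ha_int : Integrable a P := ha_L2.integrable one_le_two
  have ha_le_max : ∀ᵐ ω ∂P, a ω ≤ a_max := ha_max ▸ ae_le_essSup ha_bdd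
  have hEa_le_max : ∫ ω, a ω ∂P ≤ a_max := by
    simpa using integral_mono_ae ha_int (integrable_const a_max) ha_le_max
  have ha_max_pos : 0 < a_max := ha_pos.trans_le hEa_le_max
  have hμρ : μ * ρ = (∫ ω, a ω * τ ω ∂P) / a_max := by
    rw [hμ, hρ]; field_simp
  refine ⟨⟨hρ ▸ div_pos ha_pos ha_max_pos, hρ ▸ (div_le_one ha_max_pos).2 hEa_le_max⟩, ?_, ?_⟩
  · rw [hμρ, hρ]
    exact div_add_mul_one_sub_div_le_integral ha_int hτ_int haτ_int ha_max_pos ha_le_max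
      (hτ_bdd.mono fun _ h => h.1)
  · rw [hμρ, hρ]
    exact integral_le_div_add_mul_one_sub_div ha_int hτ_int haτ_int ha_max_pos ha_le_max
      (hτ_bdd.mono fun _ h => h.2)

/-- **Section 4.2** (Validity of the internal-validity bounds regardless of the sign of
the weights). For a square-integrable weight function `a` with `E[a] > 0` and essential
supremum `a_max < ∞` (sign unrestricted) and an integrable CATE function `τ` with
`a·τ` integrable and `B_ℓ ≤ τ ≤ B_u` a.s., setting `μ := E[a·τ]/E[a]` and
`ρ := E[a]/a_max`, one has `ρ ∈ (0,1]` and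
`μ·ρ + B_ℓ·(1 − ρ) ≤ E[τ] ≤ μ·ρ + B_u·(1 − ρ)`. -/
theorem bounds_valid_regardless_of_weight_sign
    {Ω : Type*} {mΩ : MeasurableSpace Ω} (P : Measure Ω) [IsProbabilityMeasure P]
    (a τ : Ω → ℝ)
    (ha_meas : Measurable a)
    (ha_L2 : MemLp a 2 P)
    (ha_pos : 0 < ∫ ω, a ω ∂P)
    (ha_bdd : ∃ C : ℝ, ∀ᵐ ω ∂P, a ω ≤ C)
    (hτ_int : Integrable τ P)
    (haτ_int : Integrable (fun ω => a ω * τ ω) P)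
    (Bl Bu : ℝ) (hB : Bl ≤ Bu)
    (hτ_bdd : ∀ᵐ ω ∂P, Bl ≤ τ ω ∧ τ ω ≤ Bu)
    (a_max : ℝ) (ha_max : a_max = essSup a P)
    (μ : ℝ) (hμ : μ = (∫ ω, a ω * τ ω ∂P) / (∫ ω, a ω ∂P))
    (ρ : ℝ) (hρ : ρ = (∫ ω, a ω ∂P) / a_max) :
    (0 < ρ ∧ ρ ≤ 1) ∧
    μ * ρ + Bl * (1 - ρ) ≤ (∫ ω, τ ω ∂P) ∧
    (∫ ω, τ ω ∂P) ≤ μ * ρ + Bu * (1 - ρ) :=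
  bounds_valid_regardless_of_weight_sign_general (mΩ := mΩ) P a τ ha_L2 ha_pos ha_bdd hτ_int haτ_int
    Bl Bu hτ_bdd a_max ha_max μ hμ ρ hρ
end

section
/- Equivalence of the two TWFE weight formulas (Appendix G): Let T ≥ 2, let G : Ω → {2,…,T} ∪ {∞} be a random adoption date, let P be uniformly distributed on {1,…,T} and independent of G, and set D := 1{G ≤ P}. Then for every k ∈ {2,…,T} with P(G = k) > 0: 1 − E[D | G = k] − E[D·1{P ≥ k}]/P(P ≥ k) + E[D] = E[D] − E[D | G = k] + P(G > k) − E[D·1{G > k}]/E[D | G = k]. -/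
open MeasureTheory ProbabilityTheory
open scoped ENNReal

/-!
Independence of `G` and `Pv` gives `E[D | G = k] = P(Pv ≥ k)`. Splitting the event
`{G ≤ Pv} ∩ {Pv ≥ k}` according to `G ≤ k` (where `G ≤ Pv` is then automatic) or `G > k`,
independence again gives
`E[D·1{Pv ≥ k}] = P(G ≤ k)·P(Pv ≥ k) + E[D·1{G > k}]`. After these two substitutions both sides
equal `E[D] − P(Pv ≥ k) + P(G > k) − E[D·1{G > k}] / P(Pv ≥ k)`.
-/

theorem setIntegral_indicator_one {X : Type*} {mX : MeasurableSpace X} {μ : Measure X}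
    {s : Set X} (hs : MeasurableSet s) (t : Set X) :
    ∫ x in t, s.indicator 1 x ∂μ = μ.real (s ∩ t) := by
  rw [integral_indicator_one hs, measureReal_restrict_apply hs]

section TreatedAtRandomPeriod

variable {Ω α : Type*} {mΩ : MeasurableSpace Ω} {P : Measure Ω}
  [LinearOrder α] [MeasurableSpace α] [DiscreteMeasurableSpace α] {X Y : Ω → α}

theorem measurableSet_setOf_le_of_discrete [Countable α] (hX : Measurable X) (hY : Measurable Y) :
    MeasurableSet {ω | X ω ≤ Y ω} :=
  hX.prodMk hY (MeasurableSet.of_discrete (s := {p : α × α | p.1 ≤ p.2}))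

theorem ProbabilityTheory.IndepFun.measureReal_setOf_le_inter_eq (hXY : IndepFun X Y P) (x : α) :
    P.real ({ω | X ω ≤ Y ω} ∩ {ω | X ω = x}) = P.real {ω | X ω = x} * P.real {ω | x ≤ Y ω} := by
  have hset : {ω | X ω ≤ Y ω} ∩ {ω | X ω = x} = X ⁻¹' {x} ∩ Y ⁻¹' Set.Ici x := by
    ext ω
    simp only [Set.mem_inter_iff, Set.mem_ofPred_eq, Set.mem_preimage, Set.mem_singleton_iff,
      Set.mem_Ici]
    grind
  rw [hset, measureReal_def, hXY.measure_inter_preimage_eq_mul _ _ .of_discrete .of_discrete,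
    ENNReal.toReal_mul]
  rfl

theorem ProbabilityTheory.IndepFun.measureReal_setOf_le_inter_le_eq [Countable α]
    [IsProbabilityMeasure P] (hX : Measurable X) (hY : Measurable Y) (hXY : IndepFun X Y P)
    (x : α) :
    P.real ({ω | X ω ≤ Y ω} ∩ {ω | x ≤ Y ω})
      = (1 - P.real {ω | x < X ω}) * P.real {ω | x ≤ Y ω}
        + P.real ({ω | X ω ≤ Y ω} ∩ {ω | x < X ω}) := by
  have hsplit : {ω | X ω ≤ Y ω} ∩ {ω | x ≤ Y ω}
      = X ⁻¹' Set.Iic x ∩ Y ⁻¹' Set.Ici x ∪ {ω | X ω ≤ Y ω} ∩ {ω | x < X ω} := by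
    ext ω
    simp only [Set.mem_inter_iff, Set.mem_union, Set.mem_ofPred_eq, Set.mem_preimage,
      Set.mem_Iic, Set.mem_Ici]
    grind
  have hdisj : Disjoint (X ⁻¹' Set.Iic x ∩ Y ⁻¹' Set.Ici x) ({ω | X ω ≤ Y ω} ∩ {ω | x < X ω}) :=
    Set.disjoint_left.mpr fun ω h₁ h₂ => (not_le.mpr h₂.2) h₁.1
  have hIic : P.real (X ⁻¹' Set.Iic x) = 1 - P.real {ω | x < X ω} := by
    rw [← Set.compl_Ioi, Set.preimage_compl, probReal_compl_eq_one_sub (hX .of_discrete)]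
    rfl
  rw [hsplit, measureReal_union hdisj
    ((measurableSet_setOf_le_of_discrete hX hY).inter (hX .of_discrete)), measureReal_def,
    hXY.measure_inter_preimage_eq_mul _ _ .of_discrete .of_discrete, ENNReal.toReal_mul,
    ← measureReal_def, ← measureReal_def, hIic]
  rfl

end TreatedAtRandomPeriod

/-- Here `a, r, g, c, e` stand for `P(G = k)`, `P(Pv ≥ k)`, `P(G > k)`, `E[D·1{G > k}]`, `E[D]`. -/
theorem twfe_weight_identity {a r g c e : ℝ} (ha : a ≠ 0) (hr : r ≠ 0) :
    1 - a * r / a - ((1 - g) * r + c) / r + e = e - a * r / a + g - c / (a * r / a) := by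
  field_simp
  ring

theorem twfe_weight_formulas_equivalent_general
    {Ω : Type*} {mΩ : MeasurableSpace Ω} (P : Measure Ω) [IsProbabilityMeasure P]
    (T : ℕ)
    (G : Ω → ℕ∞) (hG_meas : Measurable G)
    (Pv : Ω → ℕ) (hPv_meas : Measurable Pv)
    (hPv_unif : ∀ t : ℕ, 1 ≤ t → t ≤ T → P {ω | Pv ω = t} = ((T : ℝ≥0∞))⁻¹)
    (hindep : IndepFun G Pv P)
    (D : Ω → ℝ) (hD : ∀ ω, D ω = if G ω ≤ (Pv ω : ℕ∞) then 1 else 0)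
    (k : ℕ) (hk2 : 2 ≤ k) (hkT : k ≤ T)
    (hGk_pos : 0 < P {ω | G ω = (k : ℕ∞)}) :
    1 - (∫ ω in {ω | G ω = (k : ℕ∞)}, D ω ∂P) / (P {ω | G ω = (k : ℕ∞)}).toReal
      - (∫ ω in {ω | k ≤ Pv ω}, D ω ∂P) / (P {ω | k ≤ Pv ω}).toReal
      + (∫ ω, D ω ∂P)
    = (∫ ω, D ω ∂P)
      - (∫ ω in {ω | G ω = (k : ℕ∞)}, D ω ∂P) / (P {ω | G ω = (k : ℕ∞)}).toReal
      + (P {ω | (k : ℕ∞) < G ω}).toReal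
      - (∫ ω in {ω | (k : ℕ∞) < G ω}, D ω ∂P) /
          ((∫ ω in {ω | G ω = (k : ℕ∞)}, D ω ∂P) / (P {ω | G ω = (k : ℕ∞)}).toReal) := by
  set Pv' : Ω → ℕ∞ := fun ω => Pv ω
  have hPv'_meas : Measurable Pv' := Measurable.of_discrete.comp hPv_meas
  have hindep' : IndepFun G Pv' P := hindep.comp measurable_id .of_discrete
  have hD_eq : D = {ω | G ω ≤ Pv' ω}.indicator 1 := by
    funext ω
    simp [hD, Pv', Set.indicator_apply]
  have hPk : {ω | k ≤ Pv ω} = {ω | (k : ℕ∞) ≤ Pv' ω} := by simp [Pv']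
  have hPv_eq_k : P {ω | Pv ω = k} ≠ 0 := by simp [hPv_unif k (by omega) hkT]
  have hPk_ne : P.real {ω | (k : ℕ∞) ≤ Pv' ω} ≠ 0 :=
    (measureReal_ne_zero_iff).2 fun h =>
      hPv_eq_k (measure_mono_null (fun ω hω => by simp_all [Pv']) h)
  have hGk_ne : P.real {ω | G ω = (k : ℕ∞)} ≠ 0 := (measureReal_ne_zero_iff).2 hGk_pos.ne'
  have hS := measurableSet_setOf_le_of_discrete hG_meas hPv'_meas
  simp only [hD_eq, hPk, setIntegral_indicator_one hS, integral_indicator_one hS,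
    ← measureReal_def]
  rw [hindep'.measureReal_setOf_le_inter_eq,
    hindep'.measureReal_setOf_le_inter_le_eq hG_meas hPv'_meas]
  exact twfe_weight_identity hGk_ne hPk_ne

/-- **Appendix G** (Equivalence of the two TWFE weight formulas). With `G` the adoption
date, `Pv` uniform on `{1,…,T}` and independent of `G`, and `D = 1{G ≤ Pv}`, for every
`k ∈ {2,…,T}` with `P(G = k) > 0`:
`1 − E[D|G=k] − E[D·1{Pv ≥ k}]/P(Pv ≥ k) + E[D]
  = E[D] − E[D|G=k] + P(G > k) − E[D·1{G > k}]/E[D|G=k]`. -/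
theorem twfe_weight_formulas_equivalent
    {Ω : Type*} {mΩ : MeasurableSpace Ω} (P : Measure Ω) [IsProbabilityMeasure P]
    (T : ℕ) (hT : 2 ≤ T)
    (G : Ω → ℕ∞) (hG_meas : Measurable G)
    (hG_range : ∀ ω, G ω = ⊤ ∨ (2 ≤ G ω ∧ G ω ≤ (T : ℕ∞)))
    (Pv : Ω → ℕ) (hPv_meas : Measurable Pv)
    (hPv_range : ∀ ω, 1 ≤ Pv ω ∧ Pv ω ≤ T)
    (hPv_unif : ∀ t : ℕ, 1 ≤ t → t ≤ T → P {ω | Pv ω = t} = ((T : ℝ≥0∞))⁻¹)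
    (hindep : IndepFun G Pv P)
    (D : Ω → ℝ) (hD : ∀ ω, D ω = if G ω ≤ (Pv ω : ℕ∞) then 1 else 0)
    (k : ℕ) (hk2 : 2 ≤ k) (hkT : k ≤ T)
    (hGk_pos : 0 < P {ω | G ω = (k : ℕ∞)}) :
    1 - (∫ ω in {ω | G ω = (k : ℕ∞)}, D ω ∂P) / (P {ω | G ω = (k : ℕ∞)}).toReal
      - (∫ ω in {ω | k ≤ Pv ω}, D ω ∂P) / (P {ω | k ≤ Pv ω}).toReal
      + (∫ ω, D ω ∂P)
    = (∫ ω, D ω ∂P)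
      - (∫ ω in {ω | G ω = (k : ℕ∞)}, D ω ∂P) / (P {ω | G ω = (k : ℕ∞)}).toReal
      + (P {ω | (k : ℕ∞) < G ω}).toReal
      - (∫ ω in {ω | (k : ℕ∞) < G ω}, D ω ∂P) /
          ((∫ ω in {ω | G ω = (k : ℕ∞)}, D ω ∂P) / (P {ω | G ω = (k : ℕ∞)}).toReal) :=
  twfe_weight_formulas_equivalent_general (mΩ := mΩ) P T G hG_meas Pv hPv_meas hPv_unif hindep D hD
    k hk2 hkT hGk_pos
end

section
/- Upper bound on the internal validity of the OLS estimand when 1/2 is in the support of the propensity score (Section 5.1): Let p be a random variable with values in [0,1] such that 1/2 lies in the support of the distribution of p, i.e., P(|p − 1/2| < ε) > 0 for every ε > 0. Then essSup(p·(1−p)) = 1/4, and consequently E[p·(1−p)]/essSup(p·(1−p)) ≤ 4·E[p]·(1 − E[p]). -/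
/-!
Since `x (1 - x) = 1/4 - (x - 1/2)²`, the function `p (1 - p)` never exceeds `1/4` and exceeds
every `a < 1/4` on the event `|p - 1/2| < √(1/4 - a)`, which has positive probability because
`1/2` is in the support of `p`; hence its essential supremum is `1/4`. The second claim is then
`E[p (1 - p)] = E[p] (1 - E[p]) - Var[p] ≤ E[p] (1 - E[p])`.
-/

open MeasureTheory ProbabilityTheory

lemma mul_one_sub_eq_quarter_sub_sq (x : ℝ) : x * (1 - x) = 1 / 4 - (x - 1 / 2) ^ 2 := by
  ring

lemma essSup_eq_of_ae_le_of_measure_ne_zero {α : Type*} {_ : MeasurableSpace α}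
    {μ : Measure α} {f : α → ℝ} {c : ℝ} (hle : ∀ᵐ x ∂μ, f x ≤ c)
    (hlt : ∀ a < c, μ {x | a < f x} ≠ 0) : essSup f μ = c := by
  rw [essSup_eq_sInf]
  refine IsLeast.csInf_eq ⟨?_, fun a ha => ?_⟩
  · show μ {x | c < f x} = 0
    simpa only [ae_iff, not_le] using hle
  · by_contra! hac
    exact hlt a hac ha

lemma essSup_mul_one_sub_eq_quarter {Ω : Type*} {_ : MeasurableSpace Ω} {μ : Measure Ω}
    {p : Ω → ℝ} (hsupp : ∀ ε : ℝ, 0 < ε → 0 < μ {ω | |p ω - 1 / 2| < ε}) :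
    essSup (fun ω => p ω * (1 - p ω)) μ = 1 / 4 := by
  refine essSup_eq_of_ae_le_of_measure_ne_zero (ae_of_all _ fun ω => ?_) fun a ha => ?_
  · rw [mul_one_sub_eq_quarter_sub_sq]
    linarith [sq_nonneg (p ω - 1 / 2)]
  · have hε : 0 < √(1 / 4 - a) := Real.sqrt_pos.mpr (by linarith)
    have hsub : {ω | |p ω - 1 / 2| < √(1 / 4 - a)} ⊆ {ω | a < p ω * (1 - p ω)} := by
      intro ω hω
      have hsq : (p ω - 1 / 2) ^ 2 < 1 / 4 - a := by
        calc (p ω - 1 / 2) ^ 2 = |p ω - 1 / 2| ^ 2 := (sq_abs _).symm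
          _ < √(1 / 4 - a) ^ 2 := pow_lt_pow_left₀ hω (abs_nonneg _) two_ne_zero
          _ = 1 / 4 - a := Real.sq_sqrt (by linarith)
      show a < p ω * (1 - p ω)
      rw [mul_one_sub_eq_quarter_sub_sq]
      linarith
    exact ((hsupp _ hε).trans_le (measure_mono hsub)).ne'

lemma integral_mul_one_sub_eq_sub_variance {Ω : Type*} {_ : MeasurableSpace Ω}
    {μ : Measure Ω} [IsProbabilityMeasure μ] {X : Ω → ℝ} (hX : MemLp X 2 μ) :
    ∫ ω, X ω * (1 - X ω) ∂μ = μ[X] * (1 - μ[X]) - Var[X; μ] := by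
  have hint : ∫ ω, X ω * (1 - X ω) ∂μ = μ[X] - μ[X ^ 2] := by
    rw [← integral_sub (g := X ^ 2) (hX.integrable one_le_two) hX.integrable_sq]
    exact integral_congr_ae (ae_of_all _ fun ω => by simp only [Pi.pow_apply]; ring)
  rw [hint, variance_eq_sub hX]
  ring

/-- **Section 5.1** (Upper bound on the internal validity of the OLS estimand when `1/2`
is in the support of the propensity score). If `p` takes values in `[0,1]` and `1/2` lies
in the support of its distribution, then `essSup(p(1−p)) = 1/4` and therefore
`E[p(1−p)]/essSup(p(1−p)) ≤ 4·E[p]·(1 − E[p])`. -/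
theorem ols_internal_validity_upper_bound
    {Ω : Type*} {mΩ : MeasurableSpace Ω} (P : Measure Ω) [IsProbabilityMeasure P]
    (p : Ω → ℝ) (hp_meas : Measurable p)
    (hp01 : ∀ ω, 0 ≤ p ω ∧ p ω ≤ 1)
    (hsupp : ∀ ε : ℝ, 0 < ε → 0 < P {ω | |p ω - 1/2| < ε}) :
    essSup (fun ω => p ω * (1 - p ω)) P = 1/4 ∧
    (∫ ω, p ω * (1 - p ω) ∂P) / essSup (fun ω => p ω * (1 - p ω)) P ≤
      4 * (∫ ω, p ω ∂P) * (1 - ∫ ω, p ω ∂P) := by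
  have hess := essSup_mul_one_sub_eq_quarter hsupp
  have hp : MemLp p 2 P :=
    MemLp.of_bound hp_meas.aestronglyMeasurable 1 (ae_of_all _ fun ω => by
      rw [Real.norm_eq_abs, abs_le]
      exact ⟨by linarith [(hp01 ω).1], (hp01 ω).2⟩)
  refine ⟨hess, ?_⟩
  rw [hess, integral_mul_one_sub_eq_sub_variance hp]
  linarith [variance_nonneg p P]
end
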